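/- arXiv:1909.04653 — 8 statements merged into one kernel-verified Lean document; each statement's English description precedes it below -/
import Mathlib

section
/- (Proposition 1, spurious critical point.) Let w̄ ∈ ℝ^p satisfy 𝟙/√p + w̄ = −v* and let ā = (𝟙𝟙ᵀ + (π−1)I)^{-1}(𝟙𝟙ᵀ − I)a* (the matrix 𝟙𝟙ᵀ + (π−1)I is invertible). Then (w̄, ā) is a stationary point of both population gradient maps: G_a(w̄, ā) = 0 and G_w(w̄, ā) = 0. -/
open Real
open scoped BigOperators

noncomputable section

/-- Euclidean dot product on `ℝ^n`. -/
def dotp {n : ℕ} (u v : Fin n → ℝ) : ℝ := ∑ i, u i * v i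

/-- Euclidean norm `‖u‖₂` on `ℝ^n`. -/
def nrm {n : ℕ} (u : Fin n → ℝ) : ℝ := Real.sqrt (dotp u u)

/-- The shortcut vector `𝟙/√p ∈ ℝ^p`. -/
def sc (p : ℕ) : Fin p → ℝ := fun _ => 1 / Real.sqrt p

/-- The angle kernel `g(φ) = (π − φ)cos φ + sin φ`. -/
def gker (φ : ℝ) : ℝ := (π - φ) * Real.cos φ + Real.sin φ

/-- The angle `φ(w) = arccos((𝟙/√p + w)ᵀ v*)`. -/
def phiAngle {p : ℕ} (vstar w : Fin p → ℝ) : ℝ := Real.arccos (dotp (sc p + w) vstar)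

/-- Population gradient map with respect to the output weight `a`:
`G_a(w,a) = (1/(2π))(𝟙𝟙ᵀ + (π−1)I)a − (1/(2π))(𝟙𝟙ᵀ + (g(φ(w))−1)I)a*`. -/
def Ga {p k : ℕ} (vstar : Fin p → ℝ) (astar : Fin k → ℝ)
    (w : Fin p → ℝ) (a : Fin k → ℝ) : Fin k → ℝ :=
  fun i => (1 / (2 * π)) * ((∑ j, a j) + (π - 1) * a i)
    - (1 / (2 * π)) * ((∑ j, astar j) + (gker (phiAngle vstar w) - 1) * astar i)

/-- Population gradient map with respect to the convolutional weight `w`: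
`G_w(w,a) = −((aᵀa*)(π − φ(w))/(2π))(I − vvᵀ)v*`, where `v = 𝟙/√p + w`. -/
def Gw {p k : ℕ} (vstar : Fin p → ℝ) (astar : Fin k → ℝ)
    (w : Fin p → ℝ) (a : Fin k → ℝ) : Fin p → ℝ :=
  fun i => -(dotp a astar * (π - phiAngle vstar w) / (2 * π))
    * (vstar i - dotp (sc p + w) vstar * (sc p + w) i)

/-- One gradient descent step on `w` followed by the normalization step:
`w̃⁺ = w − η_w G_w(w,a)`, `w⁺ = (𝟙/√p + w̃⁺)/‖𝟙/√p + w̃⁺‖₂ − 𝟙/√p`. -/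
def wStep {p k : ℕ} (vstar : Fin p → ℝ) (astar : Fin k → ℝ) (ηw : ℝ)
    (wt : Fin p → ℝ) (at' : Fin k → ℝ) : Fin p → ℝ :=
  (nrm (sc p + (wt - ηw • Gw vstar astar wt at')))⁻¹ •
    (sc p + (wt - ηw • Gw vstar astar wt at')) - sc p

/-- One gradient descent step on `a`: `a⁺ = a − η_a G_a(w,a)`. -/
def aStep {p k : ℕ} (vstar : Fin p → ℝ) (astar : Fin k → ℝ) (ηa : ℝ)
    (wt : Fin p → ℝ) (at' : Fin k → ℝ) : Fin k → ℝ :=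
  at' - ηa • Ga vstar astar wt at'

/-- Proposition 1, spurious critical point: at `𝟙/√p + w̄ = −v*` and
`ā = (𝟙𝟙ᵀ + (π−1)I)⁻¹(𝟙𝟙ᵀ − I)a*`, both population gradient maps vanish
(and the matrix `𝟙𝟙ᵀ + (π−1)I` is invertible). -/
theorem stmt4 (p k : ℕ) (hp : 0 < p) (hk : 0 < k)
    (vstar : Fin p → ℝ) (hv : nrm vstar = 1)
    (astar : Fin k → ℝ)
    (wbar : Fin p → ℝ) (hwbar : sc p + wbar = -vstar)
    (abar : Fin k → ℝ)
    (habar : abar =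
      Matrix.mulVec (Matrix.of (fun _ _ => (1 : ℝ)) + (π - 1) • (1 : Matrix (Fin k) (Fin k) ℝ))⁻¹
        (Matrix.mulVec (Matrix.of (fun _ _ => (1 : ℝ)) - (1 : Matrix (Fin k) (Fin k) ℝ)) astar)) :
    IsUnit (Matrix.of (fun _ _ => (1 : ℝ)) + (π - 1) • (1 : Matrix (Fin k) (Fin k) ℝ)) ∧
      Ga vstar astar wbar abar = 0 ∧ Gw vstar astar wbar abar = 0 := by
  have hπ : (1:ℝ) < π := by nlinarith [Real.pi_gt_three]
  set J : Matrix (Fin k) (Fin k) ℝ := Matrix.of (fun _ _ => (1:ℝ)) with hJ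
  set M : Matrix (Fin k) (Fin k) ℝ := J + (π - 1) • 1 with hM
  have hπ1 : π - 1 ≠ 0 := by linarith
  have hc : (k:ℝ) + π - 1 ≠ 0 := by
    have h1 : (1:ℝ) ≤ (k:ℝ) := by exact_mod_cast hk
    nlinarith
  have hJJ : J * J = (k:ℝ) • J := by
    ext i j; simp [hJ, Matrix.mul_apply]
  set Minv : Matrix (Fin k) (Fin k) ℝ := (π-1)⁻¹ • (1 - ((k:ℝ)+π-1)⁻¹ • J) with hMi
  have hMJ : M * J = ((k:ℝ)+π-1) • J := by
    rw [hM, Matrix.add_mul, Matrix.smul_mul, Matrix.one_mul, hJJ]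
    module
  have hJM : J * M = ((k:ℝ)+π-1) • J := by
    rw [hM, Matrix.mul_add, Matrix.mul_smul, Matrix.mul_one, hJJ]
    module
  have hRight : M * Minv = 1 := by
    rw [hMi, Matrix.mul_smul, Matrix.mul_sub, Matrix.mul_one, Matrix.mul_smul, hMJ,
      smul_smul, inv_mul_cancel₀ hc, one_smul, hM, add_sub_cancel_left, smul_smul,
      inv_mul_cancel₀ hπ1, one_smul]
  have hLeft : Minv * M = 1 := by
    rw [hMi, Matrix.smul_mul, Matrix.sub_mul, Matrix.one_mul, Matrix.smul_mul, hJM,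
      smul_smul, inv_mul_cancel₀ hc, one_smul, hM, add_sub_cancel_left, smul_smul,
      inv_mul_cancel₀ hπ1, one_smul]
  have hUnit : IsUnit M := ⟨⟨M, Minv, hRight, hLeft⟩, rfl⟩
  have hinv : M⁻¹ = Minv := Matrix.inv_eq_right_inv hRight
  have key : M.mulVec abar = (J - 1).mulVec astar := by
    rw [habar, Matrix.mulVec_mulVec, hinv, hRight, Matrix.one_mulVec]
  have keyi : ∀ i, (∑ j, abar j) + (π-1) * abar i = (∑ j, astar j) - astar i := by
    intro i
    have h := congrFun key i
    simp only [Matrix.mulVec, dotProduct, hM, hJ, Matrix.add_apply, Matrix.sub_apply,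
      Matrix.smul_apply, Matrix.one_apply, Matrix.of_apply, smul_eq_mul, mul_one,
      mul_add, mul_sub, mul_ite, mul_zero, one_mul, zero_mul, add_mul, sub_mul, ite_mul,
      Finset.sum_add_distrib, Finset.sum_sub_distrib, Finset.sum_ite_eq, Finset.mem_univ,
      if_true] at h
    linear_combination h
  have hvv : dotp vstar vstar = 1 := Real.sqrt_eq_one.mp hv
  have hdot : dotp (sc p + wbar) vstar = -1 := by
    rw [hwbar]
    have : dotp (-vstar) vstar = -(dotp vstar vstar) := by
      simp [dotp, Finset.sum_neg_distrib]
    rw [this, hvv]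
  have hphi : phiAngle vstar wbar = π := by
    rw [phiAngle, hdot, Real.arccos_neg_one]
  have hg : gker π = 0 := by simp [gker]
  refine ⟨hUnit, ?_, ?_⟩
  · funext i
    show (1 / (2 * π)) * ((∑ j, abar j) + (π - 1) * abar i)
      - (1 / (2 * π)) * ((∑ j, astar j) + (gker (phiAngle vstar wbar) - 1) * astar i) = 0
    rw [hphi, hg, keyi i]
    ring
  · funext i
    show -(dotp abar astar * (π - phiAngle vstar wbar) / (2 * π))
      * (vstar i - dotp (sc p + wbar) vstar * (sc p + wbar) i) = 0
    rw [hphi]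
    simp
end
end

section
/- (Lemma on 𝟙ᵀa_t.) Let (w_t, a_t) be the gradient descent iterates with normalization, with a_0 ∈ ℝ^k satisfying ‖a_0‖₂ ≤ |𝟙ᵀa*|/√k, and with step size η_a ≤ 2π/(k+π−1). Then for every t ≥ 0, −3(𝟙ᵀa*)² ≤ (𝟙ᵀa*)(𝟙ᵀa_t) − (𝟙ᵀa*)² ≤ 0. -/
open Real
open scoped BigOperators

noncomputable section

/-- Lemma on `𝟙ᵀa_t`: along the gradient descent iterates with normalization,
if `‖a_0‖₂ ≤ |𝟙ᵀa*|/√k` and `η_a ≤ 2π/(k+π−1)`, then for every `t`,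
`−3(𝟙ᵀa*)² ≤ (𝟙ᵀa*)(𝟙ᵀa_t) − (𝟙ᵀa*)² ≤ 0`. -/
theorem stmt5 (p k : ℕ) (hp : 0 < p) (hk : 0 < k)
    (vstar : Fin p → ℝ) (hv : nrm vstar = 1)
    (astar : Fin k → ℝ)
    (ηw ηa : ℝ) (hηw : 0 < ηw) (hηa : 0 < ηa)
    (hηa' : ηa ≤ 2 * π / (k + π - 1))
    (w : ℕ → Fin p → ℝ) (a : ℕ → Fin k → ℝ)
    (ha0 : nrm (a 0) ≤ |∑ j, astar j| / Real.sqrt k)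
    (hwup : ∀ t, w (t + 1) = wStep vstar astar ηw (w t) (a t))
    (haup : ∀ t, a (t + 1) = aStep vstar astar ηa (w t) (a t)) :
    ∀ t : ℕ,
      -3 * (∑ j, astar j) ^ 2 ≤ (∑ j, astar j) * (∑ j, a t j) - (∑ j, astar j) ^ 2 ∧
      (∑ j, astar j) * (∑ j, a t j) - (∑ j, astar j) ^ 2 ≤ 0 := by
  have hπ : (0:ℝ) < π := Real.pi_pos
  have hπ3 : (3:ℝ) < π := Real.pi_gt_three
  have hk1 : (1:ℝ) ≤ (k:ℝ) := by exact_mod_cast hk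
  set A := ∑ j, astar j with hA
  have hK : (0:ℝ) < (k:ℝ) + π - 1 := by linarith
  have hrK : ηa * ((k:ℝ) + π - 1) ≤ 2 * π := by
    have := (le_div_iff₀ hK).mp hηa'
    linarith
  have hr0 : 0 ≤ ηa / (2*π) := by positivity
  have hr1 : (ηa / (2*π)) * ((k:ℝ) + π - 1) ≤ 1 := by
    rw [div_mul_eq_mul_div, div_le_one (by positivity)]
    exact hrK
  have hq : 0 ≤ A^2 := sq_nonneg A
  -- sum recurrence
  have hsum : ∀ t : ℕ, ∑ j, a (t+1) j =
      (∑ j, a t j) - (ηa / (2*π)) * (((k:ℝ) + π - 1) * (∑ j, a t j)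
        - ((k:ℝ) + gker (phiAngle vstar (w t)) - 1) * A) := by
    intro t
    rw [haup t]
    simp only [aStep, Pi.sub_apply, Pi.smul_apply, smul_eq_mul, Ga]
    rw [Finset.sum_sub_distrib, ← Finset.mul_sum, Finset.sum_sub_distrib,
      ← Finset.mul_sum, ← Finset.mul_sum, Finset.sum_add_distrib, Finset.sum_add_distrib,
      ← Finset.mul_sum, ← Finset.mul_sum, Finset.sum_const, Finset.sum_const,
      Finset.card_univ, Fintype.card_fin, nsmul_eq_mul]
    ring
  -- bounds on gker
  have hgb : ∀ t : ℕ, -(π+1) ≤ gker (phiAngle vstar (w t)) ∧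
      gker (phiAngle vstar (w t)) ≤ π := by
    intro t
    set φ := phiAngle vstar (w t) with hφ
    have hφ0 : 0 ≤ φ := Real.arccos_nonneg _
    have hφπ : φ ≤ π := Real.arccos_le_pi _
    have hc1 : Real.cos φ ≤ 1 := Real.cos_le_one φ
    have hc2 : -1 ≤ Real.cos φ := Real.neg_one_le_cos φ
    have hs1 : Real.sin φ ≤ φ := Real.sin_le hφ0
    have hs2 : -1 ≤ Real.sin φ := Real.neg_one_le_sin φ
    constructor
    · unfold gker
      nlinarith [mul_le_mul_of_nonneg_left hc2 (by linarith : (0:ℝ) ≤ π - φ)]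
    · unfold gker
      nlinarith [mul_le_mul_of_nonneg_left hc1 (by linarith : (0:ℝ) ≤ π - φ)]
  -- invariant
  have key : ∀ t : ℕ, -2 * A^2 ≤ A * (∑ j, a t j) ∧ A * (∑ j, a t j) ≤ A^2 := by
    intro t
    induction t with
    | zero =>
      have hd : 0 ≤ dotp (a 0) (a 0) :=
        Finset.sum_nonneg fun i _ => mul_self_nonneg _
      have hsk : 0 < Real.sqrt k := Real.sqrt_pos.mpr (by exact_mod_cast hk)
      have h1 : dotp (a 0) (a 0) ≤ (|A| / Real.sqrt k)^2 := by
        calc dotp (a 0) (a 0) = (Real.sqrt (dotp (a 0) (a 0)))^2 := (Real.sq_sqrt hd).symm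
          _ ≤ (|A| / Real.sqrt k)^2 := by
              apply pow_le_pow_left₀ (Real.sqrt_nonneg _) ha0
      have h2 : (|A| / Real.sqrt k)^2 = A^2 / k := by
        rw [div_pow, sq_abs, Real.sq_sqrt (by positivity : (0:ℝ) ≤ (k:ℝ))]
      have hcs : (∑ j, a 0 j)^2 ≤ (k:ℝ) * dotp (a 0) (a 0) := by
        have := sq_sum_le_card_mul_sum_sq (s := Finset.univ) (f := a 0)
        simpa [dotp, Finset.card_univ, Fintype.card_fin, sq] using this
      have h3 : (∑ j, a 0 j)^2 ≤ A^2 := by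
        rw [h2] at h1
        have hkpos : (0:ℝ) < (k:ℝ) := by exact_mod_cast hk
        calc (∑ j, a 0 j)^2 ≤ (k:ℝ) * dotp (a 0) (a 0) := hcs
          _ ≤ (k:ℝ) * (A^2 / k) := mul_le_mul_of_nonneg_left h1 hkpos.le
          _ = A^2 := by field_simp
      constructor
      · nlinarith [sq_nonneg (A + ∑ j, a 0 j), sq_nonneg A]
      · nlinarith [sq_nonneg (A - ∑ j, a 0 j)]
    | succ n ih =>
      obtain ⟨ih1, ih2⟩ := ih
      obtain ⟨hg1, hg2⟩ := hgb n
      rw [hsum n]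
      set S := ∑ j, a n j with hS
      set g := gker (phiAngle vstar (w n)) with hg
      set r := ηa / (2*π) with hr
      have e1 : A * (S - r*(((k:ℝ)+π-1)*S - ((k:ℝ)+g-1)*A)) + 2*A^2
          = (1 - r*((k:ℝ)+π-1))*(A*S + 2*A^2) + r*(((k:ℝ)+g-1)+2*((k:ℝ)+π-1))*A^2 := by
        ring
      have e2 : A^2 - A * (S - r*(((k:ℝ)+π-1)*S - ((k:ℝ)+g-1)*A))
          = (1 - r*((k:ℝ)+π-1))*(A^2 - A*S) + r*(((k:ℝ)+π-1)-((k:ℝ)+g-1))*A^2 := by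
        ring
      have p1 : 0 ≤ (1 - r*((k:ℝ)+π-1))*(A*S + 2*A^2) :=
        mul_nonneg (by linarith) (by linarith)
      have p2 : 0 ≤ r*(((k:ℝ)+g-1)+2*((k:ℝ)+π-1))*A^2 :=
        mul_nonneg (mul_nonneg hr0 (by linarith)) hq
      have p3 : 0 ≤ (1 - r*((k:ℝ)+π-1))*(A^2 - A*S) :=
        mul_nonneg (by linarith) (by linarith)
      have p4 : 0 ≤ r*(((k:ℝ)+π-1)-((k:ℝ)+g-1))*A^2 :=
        mul_nonneg (mul_nonneg hr0 (by linarith)) hq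
      constructor
      · linarith [e1, p1, p2]
      · linarith [e2, p3, p4]
  intro t
  obtain ⟨h1, h2⟩ := key t
  constructor <;> linarith
end
end

section
/- (Lemma: φ_t stays bounded away from π in Stage I.) Assume the shortcut prior v* = 𝟙/√p + w* with ‖w*‖₂ ≤ 1 and a* ≠ 0. There exist constants C > 0 and c > 0 depending only on ‖a*‖₂ such that the following holds: if the gradient descent iterates with normalization start at w_0 = 0 and ‖a_0‖₂ ≤ |𝟙ᵀa*|/√k, with step sizes η_a < 2π/(k+π−1) and η_w = C‖a*‖₂² η_a², then φ_t ≤ 5π/12 for all t ≤ c/η_a². -/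
open Real
open scoped BigOperators

noncomputable section

namespace Aux

lemma dotp_self_nonneg {n : ℕ} (u : Fin n → ℝ) : 0 ≤ dotp u u :=
  Finset.sum_nonneg fun i _ => mul_self_nonneg _

lemma nrm_sq {n : ℕ} (u : Fin n → ℝ) : nrm u ^ 2 = dotp u u :=
  Real.sq_sqrt (dotp_self_nonneg u)

lemma nrm_nonneg {n : ℕ} (u : Fin n → ℝ) : 0 ≤ nrm u := Real.sqrt_nonneg _

lemma dotp_comm {n : ℕ} (u v : Fin n → ℝ) : dotp u v = dotp v u := by
  unfold dotp; exact Finset.sum_congr rfl fun i _ => mul_comm _ _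

lemma dotp_add_left {n : ℕ} (u v w : Fin n → ℝ) : dotp (u + v) w = dotp u w + dotp v w := by
  unfold dotp; rw [← Finset.sum_add_distrib]
  exact Finset.sum_congr rfl fun i _ => by simp [add_mul]

lemma dotp_sub_left {n : ℕ} (u v w : Fin n → ℝ) : dotp (u - v) w = dotp u w - dotp v w := by
  unfold dotp; rw [← Finset.sum_sub_distrib]
  exact Finset.sum_congr rfl fun i _ => by simp [sub_mul]

lemma dotp_smul_left {n : ℕ} (r : ℝ) (u w : Fin n → ℝ) : dotp (r • u) w = r * dotp u w := by
  unfold dotp; rw [Finset.mul_sum]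
  exact Finset.sum_congr rfl fun i _ => by simp [mul_assoc]

lemma dotp_add_right {n : ℕ} (u v w : Fin n → ℝ) : dotp u (v + w) = dotp u v + dotp u w := by
  rw [dotp_comm, dotp_add_left, dotp_comm v u, dotp_comm w u]

lemma dotp_sub_right {n : ℕ} (u v w : Fin n → ℝ) : dotp u (v - w) = dotp u v - dotp u w := by
  rw [dotp_comm, dotp_sub_left, dotp_comm v u, dotp_comm w u]

lemma dotp_smul_right {n : ℕ} (r : ℝ) (u w : Fin n → ℝ) : dotp u (r • w) = r * dotp u w := by
  rw [dotp_comm, dotp_smul_left, dotp_comm w u]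

lemma dotp_expand {n : ℕ} (u g : Fin n → ℝ) (r : ℝ) :
    dotp (u - r • g) (u - r • g) = dotp u u - 2*r*dotp u g + r^2*dotp g g := by
  rw [dotp_sub_left, dotp_sub_right, dotp_sub_right, dotp_smul_left, dotp_smul_left,
    dotp_smul_right, dotp_smul_right, dotp_comm g u]
  ring

lemma dotp_sub_sub {n : ℕ} (x y : Fin n → ℝ) :
    dotp (x - y) (x - y) = dotp x x - 2*dotp y x + dotp y y := by
  rw [dotp_sub_left, dotp_sub_right, dotp_sub_right, dotp_comm x y]
  ring

lemma abs_dotp_le {n : ℕ} (u v : Fin n → ℝ) : |dotp u v| ≤ nrm u * nrm v := by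
  have h := Finset.sum_mul_sq_le_sq_mul_sq Finset.univ u v
  have h2 : (dotp u v)^2 ≤ dotp u u * dotp v v := by
    unfold dotp
    refine h.trans_eq ?_
    congr 1 <;> exact Finset.sum_congr rfl fun i _ => (sq _)
  have := Real.sqrt_le_sqrt h2
  rwa [Real.sqrt_sq_eq_abs, Real.sqrt_mul (dotp_self_nonneg u)] at this

lemma abs_sum_le {n : ℕ} (u : Fin n → ℝ) : |∑ i, u i| ≤ Real.sqrt n * nrm u := by
  have h := Finset.sum_mul_sq_le_sq_mul_sq Finset.univ (fun _ : Fin n => (1:ℝ)) u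
  simp only [one_mul, one_pow] at h
  have h2 : (∑ i, u i)^2 ≤ n * dotp u u := by
    refine h.trans_eq ?_
    rw [Finset.sum_const, Finset.card_univ, Fintype.card_fin]
    simp only [nsmul_eq_mul, mul_one]
    congr 1
    exact Finset.sum_congr rfl fun i _ => (sq _)
  have := Real.sqrt_le_sqrt h2
  rwa [Real.sqrt_sq_eq_abs, Real.sqrt_mul (by positivity)] at this

lemma dotp_sc_sc {p : ℕ} (hp : 0 < p) : dotp (sc p) (sc p) = 1 := by
  unfold dotp sc
  rw [Finset.sum_const, Finset.card_univ, Fintype.card_fin]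
  have hsp : (0:ℝ) < Real.sqrt p := Real.sqrt_pos.mpr (by exact_mod_cast hp)
  have hmul : Real.sqrt p * Real.sqrt p = (p:ℝ) := Real.mul_self_sqrt (by positivity)
  field_simp
  have hp0 : (p:ℝ) ≠ 0 := Nat.cast_ne_zero.mpr hp.ne'
  rw [nsmul_eq_mul, Real.sq_sqrt (Nat.cast_nonneg _)]
  field_simp

lemma gker_abs (φ : ℝ) (h0 : 0 ≤ φ) (h1 : φ ≤ π) : |gker φ| ≤ π + 1 := by
  unfold gker
  have h2 : |(π - φ) * Real.cos φ| ≤ π := by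
    rw [abs_mul]
    have h3 : |π - φ| ≤ π := by rw [abs_of_nonneg (by linarith)]; linarith
    calc |π - φ| * |Real.cos φ| ≤ π * 1 :=
      mul_le_mul h3 (Real.abs_cos_le_one φ) (abs_nonneg _) Real.pi_nonneg
    _ = π := mul_one _
  calc |(π - φ) * Real.cos φ + Real.sin φ| ≤ |(π - φ) * Real.cos φ| + |Real.sin φ| := abs_add_le _ _
  _ ≤ π + 1 := add_le_add h2 (Real.abs_sin_le_one φ)

lemma arccos_anti {x y : ℝ} (h : x ≤ y) : Real.arccos y ≤ Real.arccos x := by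
  unfold Real.arccos
  have := Real.monotone_arcsin h
  linarith

lemma cos_5pi12 : Real.cos (5*π/12) ≤ 3/10 := by
  have h : (5*π/12 : ℝ) = π/4 + π/6 := by ring
  rw [h, Real.cos_add, Real.cos_pi_div_four, Real.sin_pi_div_four, Real.cos_pi_div_six,
    Real.sin_pi_div_six]
  have h2u : Real.sqrt 2 ≤ 1.42 := by
    rw [show (1.42:ℝ) = Real.sqrt (1.42^2) from (Real.sqrt_sq (by norm_num)).symm]
    exact Real.sqrt_le_sqrt (by norm_num)
  have h3u : Real.sqrt 3 ≤ 1.74 := by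
    rw [show (1.74:ℝ) = Real.sqrt (1.74^2) from (Real.sqrt_sq (by norm_num)).symm]
    exact Real.sqrt_le_sqrt (by norm_num)
  have h3l : (1:ℝ) ≤ Real.sqrt 3 := Real.one_le_sqrt.mpr (by norm_num)
  have h2l : (0:ℝ) ≤ Real.sqrt 2 := Real.sqrt_nonneg 2
  nlinarith

/-- The per-step cosine drop bound. -/
lemma step_cos (c s B : ℝ) (hc : c ≤ 1) (hs : 0 ≤ s) (hs1 : s ≤ 1) :
    c - (|B| + B^2/2) ≤ (c + B*s) / Real.sqrt (1 + B^2*s) := by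
  set N := Real.sqrt (1 + B^2*s) with hN
  have hN1 : 1 ≤ N := Real.one_le_sqrt.mpr (by nlinarith [sq_nonneg B])
  have hN0 : 0 < N := by linarith
  have hNsq : N^2 = 1 + B^2*s := Real.sq_sqrt (by nlinarith [sq_nonneg B])
  rw [le_div_iff₀ hN0]
  have hBs : -|B| ≤ B*s := by
    have habs : |B*s| ≤ |B| := by
      rw [abs_mul]
      have : |s| ≤ 1 := by rw [abs_of_nonneg hs]; exact hs1
      nlinarith [abs_nonneg B]
    linarith [neg_abs_le (B*s)]
  have hcN : c * N - c ≤ (N^2 - 1)/2 := by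
    have h1 : N - 1 ≤ (N^2-1)/2 := by nlinarith
    have h2 : c * N - c = c * (N - 1) := by ring
    rw [h2]
    calc c * (N-1) ≤ 1 * (N-1) := mul_le_mul_of_nonneg_right hc (by linarith)
    _ = N - 1 := one_mul _
    _ ≤ (N^2-1)/2 := h1
  have hd : 0 ≤ |B| + B^2/2 := by positivity
  have key : c * N - (c + B*s) ≤ |B| + B^2/2 := by
    have hB2s : B^2*s ≤ B^2 := by nlinarith [sq_nonneg B]
    nlinarith
  nlinarith [mul_le_mul_of_nonneg_right hd (le_of_lt hN0), mul_le_mul_of_nonneg_right (le_refl (|B| + B^2/2)) (show (0:ℝ) ≤ N - 1 by linarith)]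

/-- Pointwise form of the `a`-recursion: `a⁺ = a − η_a G_a`. -/
lemma q_rec {p k : ℕ} (vstar : Fin p → ℝ) (astar : Fin k → ℝ) (wt : Fin p → ℝ)
    (at' : Fin k → ℝ) (ηa : ℝ) :
    dotp (aStep vstar astar ηa wt at') astar
      = (1 - ηa/(2*π)*(π-1)) * dotp at' astar
        - ηa/(2*π) * ((∑ j, at' j) - ∑ j, astar j) * (∑ j, astar j)
        + ηa/(2*π) * (gker (phiAngle vstar wt) - 1) * dotp astar astar := by
  have h : ∀ j : Fin k, aStep vstar astar ηa wt at' j * astar j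
      = (1 - ηa/(2*π)*(π-1)) * (at' j * astar j)
        + (ηa/(2*π) * ((∑ i, astar i) - (∑ i, at' i))) * astar j
        + (ηa/(2*π) * (gker (phiAngle vstar wt) - 1)) * (astar j * astar j) := by
    intro j
    simp only [aStep, Ga, Pi.sub_apply, Pi.smul_apply, smul_eq_mul]
    ring
  show (∑ j, aStep vstar astar ηa wt at' j * astar j) = _
  rw [Finset.sum_congr rfl (fun j _ => h j), Finset.sum_add_distrib, Finset.sum_add_distrib,
    ← Finset.mul_sum, ← Finset.mul_sum, ← Finset.mul_sum]
  show _ = _ - _ + _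
  unfold dotp
  ring

lemma e_rec {p k : ℕ} (vstar : Fin p → ℝ) (astar : Fin k → ℝ) (wt : Fin p → ℝ)
    (at' : Fin k → ℝ) (ηa : ℝ) :
    (∑ j, aStep vstar astar ηa wt at' j) - (∑ j, astar j)
      = (1 - ηa/(2*π)*((k:ℝ)+π-1)) * ((∑ j, at' j) - ∑ j, astar j)
        - ηa/(2*π)*(π - gker (phiAngle vstar wt)) * (∑ j, astar j) := by
  have h : ∀ j : Fin k, aStep vstar astar ηa wt at' j
      = (1 - ηa/(2*π)*(π-1)) * at' j
        + (ηa/(2*π) * (gker (phiAngle vstar wt) - 1)) * astar j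
        + (ηa/(2*π) * ((∑ i, astar i) - (∑ i, at' i))) := by
    intro j
    simp only [aStep, Ga, Pi.sub_apply, Pi.smul_apply, smul_eq_mul]
    ring
  rw [Finset.sum_congr rfl (fun j _ => h j), Finset.sum_add_distrib, Finset.sum_add_distrib,
    ← Finset.mul_sum, ← Finset.mul_sum, Finset.sum_const, Finset.card_univ, Fintype.card_fin,
    nsmul_eq_mul]
  ring

set_option maxHeartbeats 1000000 in
lemma inv_step (k R2 Ss q e q' e' m g : ℝ) (hk : 1 ≤ k) (hm : 0 ≤ m) (hR2 : 0 ≤ R2)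
    (hα : m * (k + π - 1) < 1) (hg : |g| ≤ π + 1) (hSs : Ss ^ 2 ≤ k * R2)
    (hq' : q' = (1 - m * (π - 1)) * q - m * e * Ss + m * (g - 1) * R2)
    (he' : e' = (1 - m * (k + π - 1)) * e - m * (π - g) * Ss)
    (hinv : k * |q| + |Ss| * |e| ≤ 6 * (k * R2)) :
    k * |q'| + |Ss| * |e'| ≤ 6 * (k * R2) := by
  have hπ := Real.pi_gt_three
  have hmk : 0 ≤ m * k := mul_nonneg hm (by linarith)
  have hβ : 0 ≤ 1 - m * (π - 1) := by nlinarith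
  have hα0 : 0 ≤ 1 - m * (k + π - 1) := le_of_lt (by linarith)
  have hg' := abs_le.mp hg
  have e1 : |(1 - m * (π - 1)) * q| = (1 - m * (π - 1)) * |q| := by
    rw [abs_mul, abs_of_nonneg hβ]
  have e2 : |m * e * Ss| = m * |Ss| * |e| := by
    rw [abs_mul, abs_mul, abs_of_nonneg hm]; ring
  have e3 : |m * (g - 1) * R2| ≤ m * (π + 2) * R2 := by
    rw [abs_mul, abs_mul, abs_of_nonneg hm, abs_of_nonneg hR2]
    have hg1 : |g - 1| ≤ π + 2 := abs_le.mpr ⟨by linarith, by linarith⟩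
    exact mul_le_mul_of_nonneg_right (mul_le_mul_of_nonneg_left hg1 hm) hR2
  have h1 : |q'| ≤ (1 - m * (π - 1)) * |q| + m * |Ss| * |e| + m * (π + 2) * R2 := by
    rw [hq']
    have t1 : |(1 - m * (π - 1)) * q - m * e * Ss + m * (g - 1) * R2|
        ≤ |(1 - m * (π - 1)) * q| + |m * e * Ss| + |m * (g - 1) * R2| := by
      have u1 := abs_add_le ((1 - m * (π - 1)) * q - m * e * Ss) (m * (g - 1) * R2)
      have u2 := abs_sub ((1 - m * (π - 1)) * q) (m * e * Ss)
      linarith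
    rw [e1, e2] at t1
    linarith [t1, e3]
  have e4 : |(1 - m * (k + π - 1)) * e| = (1 - m * (k + π - 1)) * |e| := by
    rw [abs_mul, abs_of_nonneg hα0]
  have e5 : |m * (π - g) * Ss| ≤ m * (2*π + 1) * |Ss| := by
    rw [abs_mul, abs_mul, abs_of_nonneg hm]
    have hg2 : |π - g| ≤ 2*π + 1 := abs_le.mpr ⟨by linarith, by linarith⟩
    exact mul_le_mul_of_nonneg_right (mul_le_mul_of_nonneg_left hg2 hm) (abs_nonneg Ss)
  have h2 : |e'| ≤ (1 - m * (k + π - 1)) * |e| + m * (2*π + 1) * |Ss| := by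
    rw [he']
    have t2 := abs_sub ((1 - m * (k + π - 1)) * e) (m * (π - g) * Ss)
    rw [e4] at t2
    linarith [t2, e5]
  have c1 : k * |q'| ≤ k * ((1 - m * (π - 1)) * |q| + m * |Ss| * |e| + m * (π + 2) * R2) :=
    mul_le_mul_of_nonneg_left h1 (by linarith)
  have c2 : |Ss| * |e'| ≤ |Ss| * ((1 - m * (k + π - 1)) * |e| + m * (2*π + 1) * |Ss|) :=
    mul_le_mul_of_nonneg_left h2 (abs_nonneg _)
  have c3 : (1 - m * (π - 1)) * (k * |q| + |Ss| * |e|) ≤ (1 - m * (π - 1)) * (6 * (k * R2)) :=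
    mul_le_mul_of_nonneg_left hinv hβ
  have c4 : |Ss| * |Ss| = Ss^2 := by rw [abs_mul_abs_self, sq]
  have c5 : m * (2*π + 1) * Ss^2 ≤ m * (2*π + 1) * (k * R2) :=
    mul_le_mul_of_nonneg_left hSs (by nlinarith)
  have c6 : 0 ≤ m * (k * R2) * (3*π - 9) :=
    mul_nonneg (mul_nonneg hm (mul_nonneg (by linarith) hR2)) (by linarith)
  nlinarith [c1, c2, c3, c4, c5, c6]


set_option maxHeartbeats 1000000 in
lemma wstep_facts {p k : ℕ} (vstar : Fin p → ℝ) (astar : Fin k → ℝ)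
    (wt : Fin p → ℝ) (at' : Fin k → ℝ) (ηw : ℝ)
    (hu1 : dotp (sc p + wt) (sc p + wt) = 1) (hv1 : dotp vstar vstar = 1) :
    dotp (sc p + wStep vstar astar ηw wt at') (sc p + wStep vstar astar ηw wt at') = 1 ∧
    dotp (sc p + wStep vstar astar ηw wt at') vstar
      = (dotp (sc p + wt) vstar
          + ηw * (dotp at' astar * (π - phiAngle vstar wt) / (2 * π))
            * (1 - dotp (sc p + wt) vstar ^ 2))
        / Real.sqrt (1 + (ηw * (dotp at' astar * (π - phiAngle vstar wt) / (2 * π))) ^ 2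
            * (1 - dotp (sc p + wt) vstar ^ 2)) := by
  have hcs : |dotp (sc p + wt) vstar| ≤ 1 := by
    have h := abs_dotp_le (sc p + wt) vstar
    have hnu : nrm (sc p + wt) = 1 := by unfold nrm; rw [hu1]; exact Real.sqrt_one
    have hnv : nrm vstar = 1 := by unfold nrm; rw [hv1]; exact Real.sqrt_one
    rwa [hnu, hnv, one_mul] at h
  generalize hlam : dotp at' astar * (π - phiAngle vstar wt) / (2 * π) = lam
  generalize hcg : dotp (sc p + wt) vstar = c
  rw [hcg] at hcs
  have hc2 : c ^ 2 ≤ 1 := by nlinarith [sq_abs c, abs_nonneg c]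
  have hGw : Gw vstar astar wt at' = (-lam) • (vstar - c • (sc p + wt)) := by
    funext i
    rw [← hlam, ← hcg]
    all_goals simp only [Gw, Pi.smul_apply, Pi.sub_apply, Pi.add_apply, smul_eq_mul]
    all_goals ring
  have hY : sc p + (wt - ηw • Gw vstar astar wt at')
      = (sc p + wt) - ηw • Gw vstar astar wt at' := (add_sub_assoc _ _ _).symm
  have hdGu : dotp (sc p + wt) (Gw vstar astar wt at') = 0 := by
    rw [hGw, dotp_smul_right, dotp_sub_right, dotp_smul_right, hu1, hcg]
    ring
  have hdGG : dotp (Gw vstar astar wt at') (Gw vstar astar wt at') = lam^2 * (1 - c^2) := by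
    rw [hGw, dotp_smul_left, dotp_smul_right, dotp_expand, hv1, hu1,
      dotp_comm vstar (sc p + wt), hcg]
    ring
  have hdGv : dotp (Gw vstar astar wt at') vstar = -lam * (1 - c^2) := by
    rw [hGw, dotp_smul_left, dotp_sub_left, dotp_smul_left, hv1, hcg]
    ring
  have hYY : dotp ((sc p + wt) - ηw • Gw vstar astar wt at')
      ((sc p + wt) - ηw • Gw vstar astar wt at') = 1 + (ηw*lam)^2 * (1 - c^2) := by
    rw [dotp_expand, hu1, hdGu, hdGG]
    ring
  have hYv : dotp ((sc p + wt) - ηw • Gw vstar astar wt at') vstar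
      = c + ηw * lam * (1 - c^2) := by
    rw [dotp_sub_left, dotp_smul_left, hdGv, hcg]
    ring
  have hXpos : (1:ℝ) ≤ 1 + (ηw*lam)^2 * (1 - c^2) := by nlinarith [sq_nonneg (ηw*lam)]
  have hNY : nrm ((sc p + wt) - ηw • Gw vstar astar wt at')
      = Real.sqrt (1 + (ηw*lam)^2 * (1 - c^2)) := by
    unfold nrm; rw [hYY]
  have hNpos : 0 < nrm ((sc p + wt) - ηw • Gw vstar astar wt at') := by
    rw [hNY]; exact Real.sqrt_pos.mpr (by linarith)
  have hwn : sc p + wStep vstar astar ηw wt at'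
      = (nrm ((sc p + wt) - ηw • Gw vstar astar wt at'))⁻¹
          • ((sc p + wt) - ηw • Gw vstar astar wt at') := by
    unfold wStep
    rw [hY]
    abel
  constructor
  · rw [hwn, dotp_smul_left, dotp_smul_right, ← nrm_sq]
    field_simp
  · rw [hwn, dotp_smul_left, hYv, hNY]
    rw [mul_comm ηw lam] at *
    rw [mul_comm lam ηw] at hYv hNY ⊢
    field_simp

end Aux

open Aux in
set_option maxHeartbeats 2000000 in
/-- Lemma: `φ_t` stays bounded away from `π` in Stage I. Under the shortcut prior,
there are constants `C, c > 0` depending only on `‖a*‖₂` such that, starting from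
`w_0 = 0` and `‖a_0‖₂ ≤ |𝟙ᵀa*|/√k`, with `η_a < 2π/(k+π−1)` and
`η_w = C‖a*‖₂²η_a²`, one has `φ_t ≤ 5π/12` for all `t ≤ c/η_a²`. -/
theorem stmt6 :
    ∀ R : ℝ, ∃ C > (0 : ℝ), ∃ c > (0 : ℝ),
      ∀ (p k : ℕ), 0 < p → 0 < k →
      ∀ (vstar wstar : Fin p → ℝ) (astar : Fin k → ℝ),
        nrm vstar = 1 → vstar = sc p + wstar → nrm wstar ≤ 1 → astar ≠ 0 →
        nrm astar = R →
      ∀ ηw ηa : ℝ, 0 < ηa → ηa < 2 * π / (k + π - 1) →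
        ηw = C * nrm astar ^ 2 * ηa ^ 2 →
      ∀ (w : ℕ → Fin p → ℝ) (a : ℕ → Fin k → ℝ),
        w 0 = 0 → nrm (a 0) ≤ |∑ j, astar j| / Real.sqrt k →
        (∀ t, w (t + 1) = wStep vstar astar ηw (w t) (a t)) →
        (∀ t, a (t + 1) = aStep vstar astar ηa (w t) (a t)) →
      ∀ t : ℕ, (t : ℝ) ≤ c / ηa ^ 2 → phiAngle vstar (w t) ≤ 5 * π / 12 := by
  intro R
  refine ⟨1/(R^4+R^8+1), by positivity, 1/110, by norm_num, ?_⟩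
  intro p k hp hk vstar wstar astar hvn hvs hwsn hane hRn ηw ηa hηa hηaU hηw
  intro w a hw0 ha0 hwrec harec
  have hπ := Real.pi_gt_three
  have hπ0 := Real.pi_pos
  have hR0 : 0 ≤ R := hRn ▸ nrm_nonneg astar
  have hR2 : dotp astar astar = R^2 := by rw [← nrm_sq astar, hRn]
  have hR2nn : (0:ℝ) ≤ R^2 := sq_nonneg R
  have hk1 : (1:ℝ) ≤ (k:ℝ) := by exact_mod_cast hk
  have hkpos : (0:ℝ) < (k:ℝ) := by linarith
  have hkπ : (0:ℝ) < (k:ℝ) + π - 1 := by linarith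
  have h2π : (0:ℝ) < 2*π := by linarith
  have hα : ηa/(2*π) * ((k:ℝ)+π-1) < 1 := by
    rw [div_mul_eq_mul_div, div_lt_one h2π]
    have h := (lt_div_iff₀ hkπ).mp hηaU
    linarith
  have hηa2 : ηa < 2 := by
    have h1 : 2*π/((k:ℝ)+π-1) ≤ 2 := by
      rw [div_le_iff₀ hkπ]; linarith
    linarith
  have hηwnn : 0 ≤ ηw := by rw [hηw]; positivity
  have hηw' : ηw = 1/(R^4+R^8+1) * R^2 * ηa^2 := by rw [hηw, hRn]
  have hvstar1 : dotp vstar vstar = 1 := by rw [← nrm_sq vstar, hvn]; norm_num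
  have hsc1 : dotp (sc p) (sc p) = 1 := dotp_sc_sc hp
  have hCR4 : 1/(R^4+R^8+1) * R^4 ≤ 1 := by
    rw [div_mul_eq_mul_div, one_mul, div_le_one (by positivity)]
    nlinarith [sq_nonneg (R^4), sq_nonneg R]
  have hSsk : (∑ j, astar j)^2 ≤ (k:ℝ) * R^2 := by
    have h := abs_sum_le astar
    rw [hRn] at h
    have hsqk : Real.sqrt (k:ℝ) ^ 2 = (k:ℝ) := Real.sq_sqrt (by positivity)
    nlinarith [sq_abs (∑ j, astar j), abs_nonneg (∑ j, astar j), Real.sqrt_nonneg (k:ℝ)]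
  -- main invariant
  have main : ∀ t : ℕ,
      dotp (sc p + w t) (sc p + w t) = 1 ∧
      (k:ℝ) * |dotp (a t) astar| + |∑ j, astar j| * |(∑ j, a t j) - ∑ j, astar j|
        ≤ 6 * ((k:ℝ) * R^2) ∧
      1/2 - 21*ηa^2*(t:ℝ) ≤ dotp (sc p + w t) vstar := by
    intro t
    induction t with
    | zero =>
      rw [hw0, add_zero]
      have hsqk : Real.sqrt (k:ℝ) ^ 2 = (k:ℝ) := Real.sq_sqrt (by positivity)
      have hsqkpos : (0:ℝ) < Real.sqrt (k:ℝ) := Real.sqrt_pos.mpr hkpos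
      refine ⟨hsc1, ?_, ?_⟩
      · -- initial a-invariant
        have hq0 : |dotp (a 0) astar| ≤ nrm (a 0) * R := by
          have := abs_dotp_le (a 0) astar
          rwa [hRn] at this
        have hS0 : |∑ j, a 0 j| ≤ Real.sqrt (k:ℝ) * nrm (a 0) := abs_sum_le (a 0)
        have hSs : |∑ j, astar j| ≤ Real.sqrt (k:ℝ) * R := by
          have := abs_sum_le astar; rwa [hRn] at this
        have ha0' : nrm (a 0) * Real.sqrt (k:ℝ) ≤ |∑ j, astar j| := by
          have h := mul_le_mul_of_nonneg_right ha0 (le_of_lt hsqkpos)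
          rwa [div_mul_cancel₀ _ (ne_of_gt hsqkpos)] at h
        have ha0R : nrm (a 0) ≤ R := by
          have h1 : |∑ j, astar j| / Real.sqrt (k:ℝ) ≤ R := by
            rw [div_le_iff₀ hsqkpos]; linarith
          linarith
        have t1 : (k:ℝ) * |dotp (a 0) astar| ≤ (k:ℝ) * R^2 := by
          have h2 : |dotp (a 0) astar| ≤ R^2 := by
            nlinarith [nrm_nonneg (a 0)]
          exact mul_le_mul_of_nonneg_left h2 (by linarith)
        have hS0' : |∑ j, a 0 j| ≤ |∑ j, astar j| := by
          nlinarith [nrm_nonneg (a 0)]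
        have t2 : |(∑ j, a 0 j) - ∑ j, astar j| ≤ 2 * |∑ j, astar j| := by
          have habs := abs_sub (∑ j, a 0 j) (∑ j, astar j)
          linarith
        have t3 : |∑ j, astar j| * |(∑ j, a 0 j) - ∑ j, astar j| ≤ 2 * ((k:ℝ) * R^2) := by
          have h3 := mul_le_mul_of_nonneg_left t2 (abs_nonneg (∑ j, astar j))
          have h4 : |∑ j, astar j| * |∑ j, astar j| = (∑ j, astar j)^2 := by
            rw [abs_mul_abs_self, sq]
          nlinarith [hSsk]
        linarith [t1, t3, mul_nonneg (le_of_lt hkpos) hR2nn]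
      · -- initial angle
        have hwst : wstar = vstar - sc p := by rw [hvs]; abel
        have hdw : dotp wstar wstar
            = dotp vstar vstar - 2*dotp (sc p) vstar + dotp (sc p) (sc p) := by
          rw [hwst]; exact dotp_sub_sub vstar (sc p)
        have hww : dotp wstar wstar ≤ 1 := by
          have h := nrm_sq wstar
          nlinarith [nrm_nonneg wstar]
        push_cast
        linarith [hdw, hww, hvstar1, hsc1]
    | succ t ih =>
      obtain ⟨hvv, hinv, hc⟩ := ih
      have hφ0 : 0 ≤ phiAngle vstar (w t) := Real.arccos_nonneg _
      have hφπ : phiAngle vstar (w t) ≤ π := Real.arccos_le_pi _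
      have hgb : |gker (phiAngle vstar (w t))| ≤ π + 1 := gker_abs _ hφ0 hφπ
      -- a-invariant at t+1
      have hinv' : (k:ℝ) * |dotp (a (t+1)) astar|
          + |∑ j, astar j| * |(∑ j, a (t+1) j) - ∑ j, astar j| ≤ 6 * ((k:ℝ) * R^2) := by
        refine inv_step (k:ℝ) (R^2) (∑ j, astar j) (dotp (a t) astar)
          ((∑ j, a t j) - ∑ j, astar j) (dotp (a (t+1)) astar)
          ((∑ j, a (t+1) j) - ∑ j, astar j) (ηa/(2*π)) (gker (phiAngle vstar (w t)))
          hk1 (by positivity) hR2nn hα hgb hSsk ?_ ?_ hinv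
        · rw [harec t, q_rec, hR2]
        · rw [harec t, e_rec]
      -- w-step
      obtain ⟨hvv', hct'⟩ := wstep_facts vstar astar (w t) (a t) ηw hvv hvstar1
      -- bounds on the drop
      have hq6 : |dotp (a t) astar| ≤ 6*R^2 := by
        have h0 : 0 ≤ |∑ j, astar j| * |(∑ j, a t j) - ∑ j, astar j| :=
          mul_nonneg (abs_nonneg _) (abs_nonneg _)
        have h1 : (k:ℝ) * |dotp (a t) astar| ≤ (k:ℝ) * (6*R^2) := by linarith
        exact le_of_mul_le_mul_left h1 hkpos
      have hlamb : |dotp (a t) astar * (π - phiAngle vstar (w t)) / (2*π)| ≤ 3*R^2 := by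
        rw [abs_div, abs_mul, abs_of_pos h2π,
          abs_of_nonneg (by linarith : (0:ℝ) ≤ π - phiAngle vstar (w t))]
        rw [div_le_iff₀ h2π]
        have h1 : |dotp (a t) astar| * (π - phiAngle vstar (w t)) ≤ 6*R^2 * π :=
          mul_le_mul hq6 (by linarith) (by linarith) (by positivity)
        linarith
      have hB : |ηw * (dotp (a t) astar * (π - phiAngle vstar (w t)) / (2*π))| ≤ 3*ηa^2 := by
        rw [abs_mul, abs_of_nonneg hηwnn]
        have h1 : ηw * |dotp (a t) astar * (π - phiAngle vstar (w t)) / (2*π)| ≤ ηw * (3*R^2) :=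
          mul_le_mul_of_nonneg_left hlamb hηwnn
        have h2 : ηw * (3*R^2) ≤ 3*ηa^2 := by
          rw [hηw']
          have h3 := mul_le_mul_of_nonneg_right hCR4 (by positivity : (0:ℝ) ≤ 3*ηa^2)
          nlinarith [sq_nonneg ηa, sq_nonneg R]
        linarith
      have hδ : |ηw * (dotp (a t) astar * (π - phiAngle vstar (w t)) / (2*π))|
          + (ηw * (dotp (a t) astar * (π - phiAngle vstar (w t)) / (2*π)))^2/2 ≤ 21*ηa^2 := by
        have hB2 : (ηw * (dotp (a t) astar * (π - phiAngle vstar (w t)) / (2*π)))^2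
            ≤ (3*ηa^2)^2 := by
          rw [← sq_abs]
          have := abs_nonneg (ηw * (dotp (a t) astar * (π - phiAngle vstar (w t)) / (2*π)))
          nlinarith
        have hηsq : ηa^2 ≤ 4 := by nlinarith
        nlinarith [sq_nonneg ηa]
      -- cosine bounds
      have hcs : |dotp (sc p + w t) vstar| ≤ 1 := by
        have h := abs_dotp_le (sc p + w t) vstar
        have hnu : nrm (sc p + w t) = 1 := by unfold nrm; rw [hvv]; exact Real.sqrt_one
        have hnv : nrm vstar = 1 := by unfold nrm; rw [hvstar1]; exact Real.sqrt_one
        rwa [hnu, hnv, one_mul] at h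
      have hct1 : dotp (sc p + w t) vstar ≤ 1 := by
        have := abs_le.mp hcs; exact this.2
      have hc2 : dotp (sc p + w t) vstar ^2 ≤ 1 := by
        nlinarith [sq_abs (dotp (sc p + w t) vstar), abs_nonneg (dotp (sc p + w t) vstar)]
      have hstep := step_cos (dotp (sc p + w t) vstar)
        (1 - dotp (sc p + w t) vstar ^2)
        (ηw * (dotp (a t) astar * (π - phiAngle vstar (w t)) / (2*π)))
        hct1 (by linarith) (by nlinarith [sq_nonneg (dotp (sc p + w t) vstar)])
      refine ⟨by rw [hwrec t]; exact hvv', hinv', ?_⟩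
      rw [hwrec t, hct']
      push_cast
      linarith [hstep, hδ, hc]
  -- conclusion
  intro t ht
  obtain ⟨-, -, hc⟩ := main t
  have hηasq : (0:ℝ) < ηa^2 := by positivity
  have ht' : (t:ℝ)*ηa^2 ≤ 1/110 := by
    have := (le_div_iff₀ hηasq).mp ht
    linarith
  have hct : 3/10 ≤ dotp (sc p + w t) vstar := by nlinarith
  show Real.arccos (dotp (sc p + w t) vstar) ≤ 5*π/12
  have hcos512 : Real.cos (5*π/12) ≤ 3/10 := cos_5pi12
  have h2 : Real.arccos (dotp (sc p + w t) vstar) ≤ Real.arccos (Real.cos (5*π/12)) :=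
    arccos_anti (by linarith)
  rwa [Real.arccos_cos (by positivity) (by linarith)] at h2
end
end

section
/- (Partial dissipativity of G_a on the set 𝒜.) Let (w, a) ∈ ℝ^p × ℝ^k satisfy: ‖w + 𝟙/√p‖₂ = 1; φ(w) ≤ 5π/12; −3(𝟙ᵀa*)² ≤ (𝟙ᵀa*)(𝟙ᵀa) − (𝟙ᵀa*)² ≤ 0; and either aᵀa* ≤ (1/20)‖a*‖₂² or ‖a − a*/2‖₂² ≥ ‖a*‖₂². Then ⟨−G_a(w,a), a* − a⟩ ≥ (1/(10π))‖a − a*‖₂². -/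
open Real
open scoped BigOperators

noncomputable section

lemma gker_hasDeriv (x : ℝ) :
    HasDerivAt (fun y => (π - y) * Real.cos y + Real.sin y) (-(π - x) * Real.sin x) x := by
  have h1 : HasDerivAt (fun y : ℝ => π - y) (-1) x := by
    simpa using (hasDerivAt_id' x).const_sub π
  have h2 := (h1.mul (Real.hasDerivAt_cos x)).add (Real.hasDerivAt_sin x)
  exact h2.congr_deriv (by ring)

lemma gker_anti : AntitoneOn gker (Set.Icc 0 π) := by
  unfold gker
  apply antitoneOn_of_deriv_nonpos (convex_Icc 0 π)
  · exact (Continuous.continuousOn (by continuity))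
  · intro x hx
    exact (gker_hasDeriv x).differentiableAt.differentiableWithinAt
  · intro x hx
    rw [interior_Icc] at hx
    rw [(gker_hasDeriv x).deriv]
    have : 0 ≤ Real.sin x := Real.sin_nonneg_of_nonneg_of_le_pi hx.1.le hx.2.le
    nlinarith [hx.2]

lemma gker_val : (1.43 : ℝ) ≤ gker (5*π/12) := by
  unfold gker
  have h1 : (5*π/12 : ℝ) = π/4 + π/6 := by ring
  rw [h1, Real.cos_add, Real.sin_add, Real.cos_pi_div_four, Real.sin_pi_div_four,
    Real.cos_pi_div_six, Real.sin_pi_div_six]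
  have s2 : Real.sqrt 2 ^ 2 = 2 := Real.sq_sqrt (by norm_num)
  have s3 : Real.sqrt 3 ^ 2 = 3 := Real.sq_sqrt (by norm_num)
  have h2a : (1.41421 : ℝ) ≤ Real.sqrt 2 := by nlinarith [Real.sqrt_nonneg 2]
  have h2b : Real.sqrt 2 ≤ 1.41422 := by nlinarith [Real.sqrt_nonneg 2]
  have h3a : (1.73205 : ℝ) ≤ Real.sqrt 3 := by nlinarith [Real.sqrt_nonneg 3]
  have h3b : Real.sqrt 3 ≤ 1.73206 := by nlinarith [Real.sqrt_nonneg 3]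
  have hpa := Real.pi_gt_d6
  have hpb := Real.pi_lt_d2
  nlinarith [mul_nonneg (Real.sqrt_nonneg 2) (Real.sqrt_nonneg 3)]

/-- Partial dissipativity of `G_a` on the set `𝒜`. -/
theorem stmt7 (p k : ℕ) (hp : 0 < p) (hk : 0 < k)
    (vstar : Fin p → ℝ) (hv : nrm vstar = 1)
    (astar : Fin k → ℝ)
    (w : Fin p → ℝ) (a : Fin k → ℝ)
    (hw : nrm (w + sc p) = 1)
    (hphi : phiAngle vstar w ≤ 5 * π / 12)
    (hsum1 : -3 * (∑ j, astar j) ^ 2 ≤ (∑ j, astar j) * (∑ j, a j) - (∑ j, astar j) ^ 2)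
    (hsum2 : (∑ j, astar j) * (∑ j, a j) - (∑ j, astar j) ^ 2 ≤ 0)
    (hbad : dotp a astar ≤ (1 / 20) * dotp astar astar ∨
      dotp astar astar ≤ dotp (a - (1 / 2 : ℝ) • astar) (a - (1 / 2 : ℝ) • astar)) :
    (1 / (10 * π)) * dotp (a - astar) (a - astar) ≤
      dotp (-(Ga vstar astar w a)) (astar - a) := by
  have hπ : (0:ℝ) < π := Real.pi_pos
  have hφ0 : 0 ≤ phiAngle vstar w := Real.arccos_nonneg _
  have hφπ : phiAngle vstar w ≤ π := Real.arccos_le_pi _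
  have h512a : (0:ℝ) ≤ 5*π/12 := by positivity
  have h512b : (5*π/12 : ℝ) ≤ π := by linarith
  have hg1 : (1.43 : ℝ) ≤ gker (phiAngle vstar w) :=
    le_trans gker_val (gker_anti ⟨hφ0, hφπ⟩ ⟨h512a, h512b⟩ hphi)
  have hg2 : gker (phiAngle vstar w) ≤ π := by
    have h0 : gker (phiAngle vstar w) ≤ gker 0 :=
      gker_anti (Set.left_mem_Icc.2 hπ.le) ⟨hφ0, hφπ⟩ hφ0
    simpa [gker] using h0
  set g := gker (phiAngle vstar w) with hgdef
  set T := ∑ j, a j with hT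
  set S := ∑ j, astar j with hS
  set AA := ∑ j, a j * a j with hAA
  set tt := ∑ j, a j * astar j with htt
  set NN := ∑ j, astar j * astar j with hNN
  have hπ6 : (3.141592:ℝ) < π := by have := Real.pi_gt_d6; norm_num at this ⊢; linarith
  have hπu : π < (3.15:ℝ) := by have := Real.pi_lt_d2; norm_num at this ⊢; linarith
  have hDD : dotp (a - astar) (a - astar) = AA - 2*tt + NN := by
    rw [dotp, Finset.sum_congr rfl fun i (_ : i ∈ Finset.univ) =>
      show (a - astar) i * (a - astar) i
        = a i * a i - 2 * (a i * astar i) + astar i * astar i from by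
          simp only [Pi.sub_apply]; ring]
    simp only [Finset.sum_add_distrib, Finset.sum_sub_distrib, ← Finset.mul_sum]
    rfl
  have hdot : dotp (-(Ga vstar astar w a)) (astar - a)
      = (1/(2*π)) * ((T - S)^2 + (π-1)*(AA - tt) - (g-1)*(tt - NN)) := by
    rw [dotp, Finset.sum_congr rfl fun i (_ : i ∈ Finset.univ) =>
      show (-(Ga vstar astar w a)) i * (astar - a) i
        = (1/(2*π)) * ((T - S) * a i) - (1/(2*π)) * ((T - S) * astar i)
          + ((π-1)/(2*π)) * (a i * a i)
          - ((π-1)/(2*π) + (g-1)/(2*π)) * (a i * astar i)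
          + ((g-1)/(2*π)) * (astar i * astar i) from by
        simp only [Ga, Pi.neg_apply, Pi.sub_apply, ← hT, ← hS, ← hgdef]
        ring]
    simp only [Finset.sum_add_distrib, Finset.sum_sub_distrib, ← Finset.mul_sum]
    try rw [← hAA, ← htt, ← hNN, ← hT, ← hS]
    try ring
  have hDnn : (0:ℝ) ≤ AA - 2*tt + NN := by
    rw [← hDD, dotp]; exact Finset.sum_nonneg fun i _ => mul_self_nonneg _
  have hNnn : (0:ℝ) ≤ NN := Finset.sum_nonneg fun i _ => mul_self_nonneg _
  have hAnn : (0:ℝ) ≤ AA := Finset.sum_nonneg fun i _ => mul_self_nonneg _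
  have h5 : (1/5) * (AA - 2*tt + NN) ≤ (T-S)^2 + (π-1)*(AA - tt) - (g-1)*(tt - NN) := by
    rcases hbad with hb | hb
    · rw [dotp, dotp, ← htt, ← hNN] at hb
      nlinarith [mul_nonneg (by linarith : (0:ℝ) ≤ π + g - 12/5) (by linarith : (0:ℝ) ≤ NN/20 - tt),
        mul_nonneg hNnn (by linarith : (0:ℝ) ≤ 19*g - π - 21.6),
        sq_nonneg (T-S), mul_nonneg (by linarith : (0:ℝ) ≤ π - 6/5) hAnn]
    · have hexp : dotp (a - (1/2:ℝ) • astar) (a - (1/2:ℝ) • astar) = AA - tt + NN/4 := by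
        rw [dotp, Finset.sum_congr rfl fun i (_ : i ∈ Finset.univ) =>
          show (a - (1/2:ℝ) • astar) i * (a - (1/2:ℝ) • astar) i
            = a i * a i - (a i * astar i) + (1/4) * (astar i * astar i) from by
            simp only [Pi.sub_apply, Pi.smul_apply, smul_eq_mul]; ring]
        simp only [Finset.sum_add_distrib, Finset.sum_sub_distrib, ← Finset.mul_sum]
        try rw [← hAA, ← htt, ← hNN]
        try ring
      rw [hexp, dotp, ← hNN] at hb
      nlinarith [mul_nonneg (by linarith : (0:ℝ) ≤ g - 6/5) hDnn,
        mul_nonneg (by linarith : (0:ℝ) ≤ π - g) (by linarith : (0:ℝ) ≤ AA - tt),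
        sq_nonneg (T-S)]
  rw [hdot, hDD]
  have e : (1/(10*π)) * (AA - 2*tt + NN) = (1/(2*π)) * ((1/5) * (AA - 2*tt + NN)) := by ring
  rw [e]
  exact mul_le_mul_of_nonneg_left h5 (by positivity)
end
end

section
/- (Lemma: escaping the bad region for a.) Suppose a* ≠ 0, ‖a_0‖₂ ≤ |𝟙ᵀa*|/√k, η_a < π/(20(k+π−1)²), and the sequence a_{t+1} = a_t − η_a G_a(w_t, a_t) is generated along any sequence (w_t) with, for all t, ‖w_t + 𝟙/√p‖₂ = 1, φ(w_t) ≤ 5π/12, and −3(𝟙ᵀa*)² ≤ (𝟙ᵀa*)(𝟙ᵀa_t) − (𝟙ᵀa*)² ≤ 0. Then there exist an absolute constant C > 0 and a time τ ≤ C/η_a such that (1/20)‖a*‖₂² ≤ a_τᵀa* ≤ 2‖a*‖₂². -/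
open Real
open scoped BigOperators

noncomputable section

lemma sqrt3_ge : (1.7:ℝ) ≤ Real.sqrt 3 := by
  nlinarith [Real.sq_sqrt (show (0:ℝ) ≤ 3 by norm_num), Real.sqrt_nonneg 3]

lemma sin_pi12_ge : (1:ℝ)/4 ≤ Real.sin (π/12) := by
  have h1 : (3.141592:ℝ) < π := Real.pi_gt_d6
  have h2 : π < 3.15 := Real.pi_lt_d2
  have hx : (0:ℝ) < π/12 := by linarith
  have hx1 : π/12 ≤ 1 := by linarith
  have h := Real.sin_gt_sub_cube hx
  have h3 : (π/12)^3 ≤ (0.27:ℝ)^3 :=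
    pow_le_pow_left₀ (by linarith) (by linarith) 3
  nlinarith [h, h3]

lemma gker_ge (φ : ℝ) (h0 : 0 ≤ φ) (h1 : φ ≤ 5*π/12) : 5/4 ≤ gker φ := by
  have hpi1 : (3.141592:ℝ) < π := Real.pi_gt_d6
  have hpi2 : π < 3.15 := Real.pi_lt_d2
  unfold gker
  rcases le_or_gt φ (π/6) with hc | hc
  · have hcos : Real.cos (π/6) ≤ Real.cos φ :=
      Real.cos_le_cos_of_nonneg_of_le_pi h0 (by linarith) hc
    rw [Real.cos_pi_div_six] at hcos
    have hsin : 0 ≤ Real.sin φ := Real.sin_nonneg_of_nonneg_of_le_pi h0 (by linarith)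
    have hc1 : (0.85:ℝ) ≤ Real.cos φ := by nlinarith [sqrt3_ge]
    have hc2 : (2.6:ℝ) ≤ π - φ := by linarith
    nlinarith [mul_le_mul hc2 hc1 (by norm_num) (by linarith)]
  · rcases le_or_gt φ (π/3) with hd | hd
    · have hcos : Real.cos (π/3) ≤ Real.cos φ :=
        Real.cos_le_cos_of_nonneg_of_le_pi h0 (by linarith) hd
      rw [Real.cos_pi_div_three] at hcos
      have hsin : Real.sin (π/6) ≤ Real.sin φ :=
        Real.sin_le_sin_of_le_of_le_pi_div_two (by linarith) (by linarith) hc.le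
      rw [Real.sin_pi_div_six] at hsin
      have hc2 : (2:ℝ) ≤ π - φ := by linarith
      nlinarith [mul_le_mul hc2 hcos (by norm_num) (by linarith)]
    · have h512 : Real.cos (5*π/12) = Real.sin (π/12) := by
        rw [← Real.cos_pi_div_two_sub]; ring_nf
      have hcos : Real.cos (5*π/12) ≤ Real.cos φ :=
        Real.cos_le_cos_of_nonneg_of_le_pi h0 (by linarith) h1
      rw [h512] at hcos
      have hc1 : (1:ℝ)/4 ≤ Real.cos φ := le_trans sin_pi12_ge hcos
      have hsin : Real.sin (π/3) ≤ Real.sin φ :=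
        Real.sin_le_sin_of_le_of_le_pi_div_two (by linarith) (by linarith) hd.le
      rw [Real.sin_pi_div_three] at hsin
      have hs1 : (0.85:ℝ) ≤ Real.sin φ := by nlinarith [sqrt3_ge]
      have hc2 : (1.8:ℝ) ≤ π - φ := by linarith
      nlinarith [mul_le_mul hc2 hc1 (by norm_num) (by linarith)]

lemma gker_le (φ : ℝ) (h0 : 0 ≤ φ) (h1 : φ ≤ π) : gker φ ≤ π + 1 := by
  unfold gker
  nlinarith [mul_nonneg (by linarith : (0:ℝ) ≤ π - φ)
    (by nlinarith [Real.cos_le_one φ] : (0:ℝ) ≤ 1 - Real.cos φ), Real.sin_le_one φ]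

lemma dotp_self_nonneg {n : ℕ} (u : Fin n → ℝ) : 0 ≤ dotp u u :=
  Finset.sum_nonneg fun i _ => mul_self_nonneg _

lemma Ga_dot {p k : ℕ} (vstar : Fin p → ℝ) (astar : Fin k → ℝ)
    (w : Fin p → ℝ) (at' : Fin k → ℝ) :
    dotp (Ga vstar astar w at') astar
      = (1/(2*π)) * ((∑ j, at' j) * (∑ j, astar j) + (π-1) * dotp at' astar
          - (∑ j, astar j)^2 - (gker (phiAngle vstar w) - 1) * dotp astar astar) := by
  unfold dotp Ga
  have h : ∀ i : Fin k,
      ((1/(2*π)) * ((∑ j, at' j) + (π-1)*at' i)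
        - (1/(2*π))*((∑ j, astar j) + (gker (phiAngle vstar w) - 1)*astar i)) * astar i
      = (1/(2*π)) * ((∑ j, at' j) - (∑ j, astar j)) * astar i
        + (1/(2*π))*(π-1) * (at' i * astar i)
        - (1/(2*π))*(gker (phiAngle vstar w) - 1) * (astar i * astar i) := fun i => by ring
  rw [Finset.sum_congr rfl (fun i _ => h i), Finset.sum_sub_distrib, Finset.sum_add_distrib,
    ← Finset.mul_sum, ← Finset.mul_sum, ← Finset.mul_sum]
  ring

lemma aStep_dot {p k : ℕ} (vstar : Fin p → ℝ) (astar : Fin k → ℝ) (ηa : ℝ)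
    (wt : Fin p → ℝ) (at' : Fin k → ℝ) :
    dotp (aStep vstar astar ηa wt at') astar
      = dotp at' astar - ηa * dotp (Ga vstar astar wt at') astar := by
  unfold dotp aStep
  have h : ∀ i : Fin k, (at' - ηa • Ga vstar astar wt at') i * astar i
      = at' i * astar i - ηa * (Ga vstar astar wt at' i * astar i) := fun i => by
    simp [Pi.sub_apply, Pi.smul_apply, smul_eq_mul]; ring
  rw [Finset.sum_congr rfl (fun i _ => h i), Finset.sum_sub_distrib, ← Finset.mul_sum]

set_option maxHeartbeats 2000000 in
/-- Lemma: escaping the bad region for `a`. There is an absolute constant `C > 0`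
such that, under the stated conditions, some time `τ ≤ C/η_a` satisfies
`(1/20)‖a*‖₂² ≤ a_τᵀa* ≤ 2‖a*‖₂²`. -/
theorem stmt8 :
    ∃ C > (0 : ℝ),
      ∀ (p k : ℕ), 0 < p → 0 < k →
      ∀ (vstar : Fin p → ℝ), nrm vstar = 1 →
      ∀ (astar : Fin k → ℝ), astar ≠ 0 →
      ∀ ηa : ℝ, 0 < ηa → ηa < π / (20 * (k + π - 1) ^ 2) →
      ∀ (w : ℕ → Fin p → ℝ) (a : ℕ → Fin k → ℝ),
        nrm (a 0) ≤ |∑ j, astar j| / Real.sqrt k →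
        (∀ t, a (t + 1) = aStep vstar astar ηa (w t) (a t)) →
        (∀ t, nrm (w t + sc p) = 1) →
        (∀ t, phiAngle vstar (w t) ≤ 5 * π / 12) →
        (∀ t, -3 * (∑ j, astar j) ^ 2 ≤
            (∑ j, astar j) * (∑ j, a t j) - (∑ j, astar j) ^ 2 ∧
          (∑ j, astar j) * (∑ j, a t j) - (∑ j, astar j) ^ 2 ≤ 0) →
      ∃ τ : ℕ, (τ : ℝ) ≤ C / ηa ∧
        (1 / 20) * dotp astar astar ≤ dotp (a τ) astar ∧
        dotp (a τ) astar ≤ 2 * dotp astar astar := by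
  refine ⟨49, by norm_num, ?_⟩
  intro p k hp hk vstar hv astar hast ηa hη hηb w a ha0 harec hwnorm hphi hband
  have hpi1 : (3.141592:ℝ) < π := Real.pi_gt_d6
  have hpi2 : π < 3.15 := Real.pi_lt_d2
  set s : ℝ := ∑ j, astar j with hs
  set A : ℝ := dotp astar astar with hAdef
  have hA0 : 0 ≤ A := dotp_self_nonneg astar
  have hApos : 0 < A := by
    obtain ⟨i, hi⟩ : ∃ i, astar i ≠ 0 := Function.ne_iff.1 hast
    exact Finset.sum_pos' (fun j _ => mul_self_nonneg _)
      ⟨i, Finset.mem_univ i, mul_self_pos.mpr hi⟩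
  have hk1 : (1:ℝ) ≤ (k:ℝ) := by exact_mod_cast hk
  set K : ℝ := (k:ℝ) + π - 1 with hKdef
  have hKpi : π ≤ K := by simp [hKdef]; linarith
  have hK3 : (3:ℝ) ≤ K := by linarith
  have hηK : ηa < π / (20 * K^2) := hηb
  have hηsmall : ηa < 1/60 := by
    have h1 : π / (20 * K^2) ≤ π / (20 * π^2) := by
      apply div_le_div_of_nonneg_left (by linarith) (by positivity)
      nlinarith
    have h2 : π / (20 * π^2) = 1/(20*π) := by field_simp
    have h3 : (1:ℝ)/(20*π) ≤ 1/60 := by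
      rw [div_le_div_iff₀ (by positivity) (by norm_num)]; linarith
    linarith
  -- Cauchy–Schwarz facts
  have hs2 : s^2 ≤ (k:ℝ) * A := by
    have h := Finset.sum_mul_sq_le_sq_mul_sq Finset.univ (fun _ : Fin k => (1:ℝ)) astar
    have h1 : ∑ _i : Fin k, ((1:ℝ))^2 = (k:ℝ) := by simp
    have h2 : ∑ i, astar i ^ 2 = A := by
      simp only [hAdef, dotp, pow_two]
    have h3 : ∑ i, (1:ℝ) * astar i = s := by simp [hs]
    calc s^2 = (∑ i, (1:ℝ) * astar i)^2 := by rw [h3]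
    _ ≤ (∑ _i : Fin k, ((1:ℝ))^2) * ∑ i, astar i ^2 := h
    _ = (k:ℝ) * A := by rw [h1, h2]
  have hx0abs : -A ≤ dotp (a 0) astar ∧ dotp (a 0) astar ≤ A := by
    have hCS : (dotp (a 0) astar)^2 ≤ dotp (a 0) (a 0) * A := by
      have h := Finset.sum_mul_sq_le_sq_mul_sq Finset.univ (a 0) astar
      simp only [pow_two] at h ⊢
      simpa [dotp, hAdef, pow_two] using h
    have ha00 : dotp (a 0) (a 0) ≤ s^2/(k:ℝ) := by
      have hd0 : 0 ≤ dotp (a 0) (a 0) := dotp_self_nonneg _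
      have hc : (|s| / Real.sqrt k)^2 = s^2/(k:ℝ) := by
        rw [div_pow, sq_abs, Real.sq_sqrt (by positivity : (0:ℝ) ≤ (k:ℝ))]
      have h6 := pow_le_pow_left₀ (Real.sqrt_nonneg _) ha0 2
      unfold nrm at h6
      rw [Real.sq_sqrt hd0, hc] at h6; exact h6
    have hsk : s^2/(k:ℝ) ≤ A := by
      rw [div_le_iff₀ (by positivity)]; linarith [hs2]
    have hsq : (dotp (a 0) astar)^2 ≤ A^2 := by
      calc (dotp (a 0) astar)^2 ≤ dotp (a 0) (a 0) * A := hCS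
      _ ≤ A * A := by
          apply mul_le_mul_of_nonneg_right _ hA0
          exact le_trans ha00 hsk
      _ = A^2 := by ring
    constructor <;> nlinarith [hsq]
  -- the recursion in terms of x t := dotp (a t) astar
  have hφ0 : ∀ t, 0 ≤ phiAngle vstar (w t) := fun t => Real.arccos_nonneg _
  have hφπ : ∀ t, phiAngle vstar (w t) ≤ π := fun t => Real.arccos_le_pi _
  have hg : ∀ t, 5/4 ≤ gker (phiAngle vstar (w t)) :=
    fun t => gker_ge _ (hφ0 t) (hphi t)
  have hgu : ∀ t, gker (phiAngle vstar (w t)) ≤ π + 1 :=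
    fun t => gker_le _ (hφ0 t) (hφπ t)
  have hrec : ∀ t, dotp (a (t+1)) astar
      = dotp (a t) astar + (ηa/(2*π)) * ((gker (phiAngle vstar (w t)) - 1) * A
          - (s * (∑ j, a t j) - s^2) - (π-1) * dotp (a t) astar) := by
    intro t
    rw [harec t, aStep_dot, Ga_dot]
    field_simp
    ring
  -- lower bound on each step while in the bad region
  have hstep_lb : ∀ t, dotp (a t) astar ≤ A/20 →
      dotp (a t) astar + ηa * A / 45 ≤ dotp (a (t+1)) astar := by
    intro t hxt
    have hD : 2*π*A/45 ≤ (gker (phiAngle vstar (w t)) - 1) * A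
        - (s * (∑ j, a t j) - s^2) - (π-1) * dotp (a t) astar := by
      have hb := (hband t).2
      have h1 : 0 ≤ (gker (phiAngle vstar (w t)) - 5/4) * A :=
        mul_nonneg (by linarith [hg t]) hA0
      have h2 : 0 ≤ (π - 1) * (A/20 - dotp (a t) astar) :=
        mul_nonneg (by linarith) (by linarith)
      have h3 : 0 ≤ (54 - 17*π) * A := mul_nonneg (by linarith) hA0
      linarith [h1, h2, h3, hb]
    have h1 : (ηa/(2*π)) * (2*π*A/45) ≤ (ηa/(2*π)) *
        ((gker (phiAngle vstar (w t)) - 1) * A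
          - (s * (∑ j, a t j) - s^2) - (π-1) * dotp (a t) astar) :=
      mul_le_mul_of_nonneg_left hD (by positivity)
    have h2 : (ηa/(2*π)) * (2*π*A/45) = ηa*A/45 := by
      field_simp
    rw [hrec t]; linarith
  -- upper bound on a step starting in the bad region
  have hstep_ub : ∀ t, dotp (a t) astar ≤ A/20 →
      dotp (a (t+1)) astar ≤ A/20 + A/40 := by
    intro t hxt
    have hb := (hband t).1
    have hη2 : ηa * (π + 3*(k:ℝ)) ≤ π/20 := by
      have hK1 : π + 3*(k:ℝ) ≤ 3*K := by simp [hKdef]; linarith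
      have hK2 : ηa ≤ π/(20*K^2) := le_of_lt hηK
      have h4 : ηa * (π + 3*(k:ℝ)) ≤ (π/(20*K^2)) * (3*K) := by
        apply mul_le_mul hK2 hK1 (by positivity) (by positivity)
      have h5 : (π/(20*K^2)) * (3*K) ≤ π/20 := by
        rw [div_mul_eq_mul_div, div_le_div_iff₀ (by positivity) (by norm_num)]
        nlinarith [mul_nonneg (mul_nonneg Real.pi_pos.le (by linarith : (0:ℝ) ≤ K))
          (by linarith : (0:ℝ) ≤ K - 3)]
      linarith
    have hDu : (gker (phiAngle vstar (w t)) - 1) * A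
        - (s * (∑ j, a t j) - s^2) - (π-1) * dotp (a t) astar
        ≤ (π + 3*(k:ℝ)) * A - (π-1) * dotp (a t) astar := by
      have h1 : (gker (phiAngle vstar (w t)) - 1) * A ≤ π * A :=
        mul_le_mul_of_nonneg_right (by linarith [hgu t]) hA0
      nlinarith [hs2]
    -- split on sign of x t
    have hmain : (ηa/(2*π)) * ((π + 3*(k:ℝ)) * A) ≤ A/40 := by
      have h1 : (ηa/(2*π)) * ((π + 3*(k:ℝ)) * A) = (ηa * (π + 3*(k:ℝ))) * A / (2*π) := by
        ring
      rw [h1, div_le_div_iff₀ (by positivity) (by norm_num)]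
      nlinarith [mul_le_mul_of_nonneg_right hη2 hA0]
    have hβ : 0 ≤ (ηa/(2*π)) * (π - 1) ∧ (ηa/(2*π)) * (π - 1) ≤ 1 := by
      constructor
      · exact mul_nonneg (by positivity) (by linarith)
      · have hq : (ηa/(2*π)) * (π-1) ≤ (ηa/(2*π)) * (2*π) :=
          mul_le_mul_of_nonneg_left (by linarith) (by positivity)
        have hq2 : (ηa/(2*π)) * (2*π) = ηa := by field_simp
        linarith
    have hterm : dotp (a t) astar - (ηa/(2*π)) * ((π-1) * dotp (a t) astar) ≤ A/20 := by
      rcases le_or_gt 0 (dotp (a t) astar) with hpos | hneg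
      · linarith [mul_nonneg (mul_nonneg (by positivity : (0:ℝ) ≤ ηa/(2*π))
          (by linarith : (0:ℝ) ≤ π - 1)) hpos]
      · linarith [mul_nonneg (by linarith [hβ.2] : (0:ℝ) ≤ 1 - (ηa/(2*π))*(π-1))
          (by linarith : (0:ℝ) ≤ -(dotp (a t) astar)), hA0]
    have hsplit : (ηa/(2*π)) * ((gker (phiAngle vstar (w t)) - 1) * A
          - (s * (∑ j, a t j) - s^2) - (π-1) * dotp (a t) astar)
        = (ηa/(2*π)) * ((gker (phiAngle vstar (w t)) - 1) * A
          - (s * (∑ j, a t j) - s^2)) - (ηa/(2*π)) * ((π-1) * dotp (a t) astar) := by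
      ring
    have hup : (ηa/(2*π)) * ((gker (phiAngle vstar (w t)) - 1) * A
          - (s * (∑ j, a t j) - s^2)) ≤ A/40 := by
      have hle : (gker (phiAngle vstar (w t)) - 1) * A - (s * (∑ j, a t j) - s^2)
          ≤ (π + 3*(k:ℝ)) * A := by
        have h1 : (gker (phiAngle vstar (w t)) - 1) * A ≤ π * A :=
          mul_le_mul_of_nonneg_right (by linarith [hgu t]) hA0
        nlinarith [hs2]
      calc (ηa/(2*π)) * ((gker (phiAngle vstar (w t)) - 1) * A
          - (s * (∑ j, a t j) - s^2))
          ≤ (ηa/(2*π)) * ((π + 3*(k:ℝ)) * A) :=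
            mul_le_mul_of_nonneg_left hle (by positivity)
        _ ≤ A/40 := hmain
    rw [hrec t, hsplit]
    linarith [hterm, hup]
  -- escape time exists
  set N : ℕ := Nat.floor ((49:ℝ)/ηa) with hNdef
  have hN1 : (N:ℝ) ≤ 49/ηa := Nat.floor_le (by positivity)
  have hN2 : 49/ηa - 1 < (N:ℝ) := Nat.sub_one_lt_floor _
  have hNη : (48:ℝ) ≤ (N:ℝ) * ηa := by
    have h1 : (49/ηa) * ηa = 49 := div_mul_cancel₀ _ (ne_of_gt hη)
    nlinarith [hN2, hη]
  have hesc : ∃ t, A/20 < dotp (a t) astar := by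
    by_contra hcon
    push_neg at hcon
    have hind : ∀ t : ℕ, dotp (a 0) astar + t * (ηa*A/45) ≤ dotp (a t) astar := by
      intro t
      induction t with
      | zero => simp
      | succ n ih =>
        have hstep := hstep_lb n (hcon n)
        push_cast
        linarith [ih, hstep]
    have hN3 := hind N
    have hx0 := hx0abs.1
    have hrw : (N:ℝ) * (ηa*A/45) = ((N:ℝ)*ηa) * (A/45) := by ring
    have h48 : (48:ℝ) * (A/45) ≤ ((N:ℝ)*ηa) * (A/45) :=
      mul_le_mul_of_nonneg_right hNη (by positivity)
    have hcN := hcon N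
    linarith [hN3, hx0, h48, hcN, hApos, hrw]
  classical
  set τ : ℕ := Nat.find hesc with hτdef
  have hτprop : A/20 < dotp (a τ) astar := Nat.find_spec hesc
  have hτmin : ∀ m, m < τ → ¬ (A/20 < dotp (a m) astar) := fun m hm => Nat.find_min hesc hm
  have hτleN : τ ≤ N := by
    -- N itself satisfies the property or some smaller t does; show some t ≤ N works
    by_contra hcon
    push_neg at hcon
    -- then for all t ≤ N, x t ≤ A/20; rerun the growth argument
    have hcon' : ∀ t, t ≤ N → dotp (a t) astar ≤ A/20 := by
      intro t ht
      have := hτmin t (lt_of_le_of_lt ht hcon)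
      linarith [not_lt.mp this]
    have hind : ∀ t : ℕ, t ≤ N → dotp (a 0) astar + t * (ηa*A/45) ≤ dotp (a t) astar := by
      intro t
      induction t with
      | zero => intro _; simp
      | succ n ih =>
        intro hle
        have hn : n ≤ N := Nat.le_of_succ_le hle
        have hstep := hstep_lb n (hcon' n hn)
        push_cast
        linarith [ih hn, hstep]
    have hN3 := hind N le_rfl
    have hx0 := hx0abs.1
    have h48 : (48:ℝ) * (A/45) ≤ ((N:ℝ)*ηa) * (A/45) :=
      mul_le_mul_of_nonneg_right hNη (by positivity)
    have hcN := hcon' N le_rfl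
    have hrw : (N:ℝ) * (ηa*A/45) = ((N:ℝ)*ηa) * (A/45) := by ring
    linarith [hN3, hx0, h48, hcN, hApos, hrw]
  refine ⟨τ, ?_, ?_, ?_⟩
  · calc (τ:ℝ) ≤ (N:ℝ) := by exact_mod_cast hτleN
    _ ≤ 49/ηa := hN1
  · linarith [hτprop]
  · rcases Nat.eq_zero_or_pos τ with h0 | hpos
    · rw [h0]
      linarith [hx0abs.2]
    · obtain ⟨m, hm⟩ := Nat.exists_eq_succ_of_ne_zero (Nat.pos_iff_ne_zero.mp hpos)
      have hmlt : m < τ := by omega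
      have hxm : dotp (a m) astar ≤ A/20 := by
        linarith [not_lt.mp (hτmin m hmlt)]
      have := hstep_ub m hxm
      rw [hm]
      linarith
end
end

section
/- (Theorem, Stage I: avoiding the spurious local optimum.) Assume the shortcut prior v* = 𝟙/√p + w* with ‖w*‖₂ ≤ 1 and a* ≠ 0. There exist constants C, c₁, c₂ > 0 depending only on ‖a*‖₂ and |𝟙ᵀa*| such that the following holds: if the gradient descent iterates with normalization start at w_0 = 0 and ‖a_0‖₂ ≤ |𝟙ᵀa*|/√k, with step sizes η_a = π/(20(k+π−1)²) and η_w = C‖a*‖₂² η_a², then for every t with c₁/η_a ≤ t ≤ c₂/η_a², one has φ_t ≤ 5π/12 and (1/5)‖a*‖₂² ≤ a_tᵀa* ≤ 3‖a*‖₂² + 2(𝟙ᵀa*)². -/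
open Real
open scoped BigOperators

noncomputable section

namespace SI

lemma dotp_self_nonneg {n : ℕ} (u : Fin n → ℝ) : 0 ≤ dotp u u :=
  Finset.sum_nonneg fun i _ => mul_self_nonneg _

lemma sq_nrm {n : ℕ} (u : Fin n → ℝ) : nrm u ^ 2 = dotp u u := Real.sq_sqrt (dotp_self_nonneg u)

lemma abs_dotp_le {n : ℕ} (u v : Fin n → ℝ) : |dotp u v| ≤ nrm u * nrm v := by
  have h : dotp u v ^ 2 ≤ dotp u u * dotp v v := by
    have := Finset.sum_mul_sq_le_sq_mul_sq Finset.univ u v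
    simpa [dotp, pow_two] using this
  calc |dotp u v| = Real.sqrt (dotp u v ^ 2) := (Real.sqrt_sq_eq_abs _).symm
    _ ≤ Real.sqrt (dotp u u * dotp v v) := Real.sqrt_le_sqrt h
    _ = nrm u * nrm v := by rw [Real.sqrt_mul (dotp_self_nonneg u)]; rfl

lemma dotp_comm {n : ℕ} (u v : Fin n → ℝ) : dotp u v = dotp v u := by
  simp [dotp, mul_comm]

lemma dotp_add_left {n : ℕ} (u v w : Fin n → ℝ) :
    dotp (u + v) w = dotp u w + dotp v w := by
  simp [dotp, add_mul, Finset.sum_add_distrib]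

lemma dotp_sub_left {n : ℕ} (u v w : Fin n → ℝ) :
    dotp (u - v) w = dotp u w - dotp v w := by
  simp [dotp, sub_mul, Finset.sum_sub_distrib]

lemma dotp_smul_left {n : ℕ} (c : ℝ) (u w : Fin n → ℝ) :
    dotp (c • u) w = c * dotp u w := by
  simp [dotp, Finset.mul_sum, mul_assoc]

lemma dotp_add_right {n : ℕ} (u v w : Fin n → ℝ) :
    dotp w (u + v) = dotp w u + dotp w v := by
  simp [dotp, mul_add, Finset.sum_add_distrib]

lemma dotp_smul_right {n : ℕ} (c : ℝ) (u w : Fin n → ℝ) :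
    dotp w (c • u) = c * dotp w u := by
  simp [dotp, Finset.mul_sum]; exact Finset.sum_congr rfl fun i _ => by ring

lemma gker_le_pi {φ : ℝ} (h0 : 0 ≤ φ) (h1 : φ ≤ π) : gker φ ≤ π := by
  unfold gker
  rcases le_or_gt 0 (Real.cos φ) with hc | hc
  · nlinarith [Real.sin_le h0, mul_nonneg (sub_nonneg.2 h1) (sub_nonneg.2 (Real.cos_le_one φ))]
  · nlinarith [Real.sin_le_one φ, mul_nonneg (sub_nonneg.2 h1) (neg_nonneg.2 hc.le),
      Real.pi_gt_three]

lemma neg_pi_le_gker {φ : ℝ} (h0 : 0 ≤ φ) (h1 : φ ≤ π) : -π ≤ gker φ := by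
  unfold gker
  nlinarith [Real.sin_nonneg_of_nonneg_of_le_pi h0 h1, Real.neg_one_le_cos φ,
    mul_nonneg (sub_nonneg.2 h1) (by linarith [Real.neg_one_le_cos φ] : (0:ℝ) ≤ Real.cos φ + 1)]

lemma gker_arccos_ge {γ : ℝ} (h2 : 2/5 ≤ γ) (h1 : γ ≤ 1) :
    1 + (9/40) * (π - 1) ≤ gker (Real.arccos γ) := by
  have hγ0 : (0:ℝ) ≤ γ := by linarith
  have hm1 : (-1:ℝ) ≤ γ := by linarith
  have hφ2 : Real.arccos γ ≤ π/2 := Real.arccos_le_pi_div_two.2 hγ0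
  have hcos : Real.cos (Real.arccos γ) = γ := Real.cos_arccos hm1 h1
  have hsin : Real.sin (Real.arccos γ) = Real.sqrt (1 - γ^2) := Real.sin_arccos γ
  set u := Real.sqrt (1 - γ^2) with hu
  have hu0 : 0 ≤ u := Real.sqrt_nonneg _
  have hu2 : u^2 = 1 - γ^2 := Real.sq_sqrt (by nlinarith)
  have h21a : (4.58:ℝ) ≤ Real.sqrt 21 := by
    rw [show (4.58:ℝ) = Real.sqrt (4.58^2) from (Real.sqrt_sq (by norm_num)).symm]
    exact Real.sqrt_le_sqrt (by norm_num)
  have h21b : Real.sqrt 21 ≤ 4.59 := by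
    rw [show (4.59:ℝ) = Real.sqrt (4.59^2) from (Real.sqrt_sq (by norm_num)).symm]
    exact Real.sqrt_le_sqrt (by norm_num)
  -- chord bound : sqrt 21 * (1 - γ) ≤ 3 * u
  have hchord : Real.sqrt 21 * (1 - γ) ≤ 3 * u := by
    have e1 : Real.sqrt 21 * (1-γ) = Real.sqrt (21 * (1-γ)^2) := by
      rw [Real.sqrt_mul (by norm_num : (0:ℝ) ≤ 21), Real.sqrt_sq (by linarith : (0:ℝ) ≤ 1 - γ)]
    have e2 : 3 * u = Real.sqrt (9 * (1-γ^2)) := by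
      rw [Real.sqrt_mul (by norm_num : (0:ℝ) ≤ 9),
        show Real.sqrt 9 = 3 by
          rw [show (9:ℝ) = 3^2 by norm_num, Real.sqrt_sq (by norm_num : (0:ℝ) ≤ 3)], hu]
    rw [e1, e2]
    refine Real.sqrt_le_sqrt ?_
    nlinarith [mul_nonneg (sub_nonneg.2 h1) (by linarith : (0:ℝ) ≤ 30*γ - 12)]
  have hslope : 0 ≤ π/2 - Real.sqrt 21/3 := by nlinarith [Real.pi_gt_d6, h21b]
  have hfin : 1 + (9/40) * (π - 1) ≤ (π/2) * γ + u := by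
    nlinarith [mul_nonneg (sub_nonneg.2 h2) hslope, h21a, Real.pi_le_four, hchord]
  have hstep : (π/2) * γ ≤ (π - Real.arccos γ) * γ := by
    apply mul_le_mul_of_nonneg_right _ hγ0
    linarith
  unfold gker
  rw [hcos, hsin]
  linarith

lemma step_lb {γ e h D : ℝ} (hγ : |γ| ≤ 1) (he : |e| ≤ D) (hh0 : 0 ≤ h) (hhD : h ≤ D^2)
    (hD1 : D ≤ 1) : γ - 2*D ≤ (γ + e) / Real.sqrt (1 + h) := by
  have hD0 : 0 ≤ D := le_trans (abs_nonneg e) he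
  set N := Real.sqrt (1+h) with hN
  have hNsq : N^2 = 1+h := Real.sq_sqrt (by linarith)
  have hNn : (0:ℝ) ≤ N := Real.sqrt_nonneg _
  have hN1 : 1 ≤ N := by nlinarith
  have hNle : N ≤ 1 + h/2 := by nlinarith
  have hN0 : (0:ℝ) < N := lt_of_lt_of_le one_pos hN1
  rw [le_div_iff₀ hN0]
  have hγ' := abs_le.1 hγ
  have he' := abs_le.1 he
  nlinarith [mul_nonneg (sub_nonneg.2 hγ'.2) (sub_nonneg.2 hN1),
    mul_nonneg hD0 (sub_nonneg.2 hN1), sq_nonneg D]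

lemma sum_aStep {p k : ℕ} (vstar : Fin p → ℝ) (astar : Fin k → ℝ) (ηa : ℝ)
    (wt : Fin p → ℝ) (at' : Fin k → ℝ) :
    ∑ j, aStep vstar astar ηa wt at' j
      = (1 - ηa * (((k:ℝ) + π - 1)/(2*π))) * (∑ j, at' j)
        + ηa * (((k:ℝ) + gker (phiAngle vstar wt) - 1)/(2*π)) * (∑ j, astar j) := by
  have hπ : π ≠ 0 := Real.pi_ne_zero
  simp only [aStep, Pi.sub_apply, Pi.smul_apply, smul_eq_mul, Ga]
  rw [Finset.sum_sub_distrib]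
  simp only [mul_sub, mul_add, Finset.sum_sub_distrib, Finset.sum_add_distrib,
    Finset.sum_const, Finset.card_univ, Fintype.card_fin, nsmul_eq_mul, ← Finset.mul_sum]
  field_simp
  ring

lemma dotp_aStep {p k : ℕ} (vstar : Fin p → ℝ) (astar : Fin k → ℝ) (ηa : ℝ)
    (wt : Fin p → ℝ) (at' : Fin k → ℝ) :
    dotp (aStep vstar astar ηa wt at') astar
      = (1 - ηa * ((π - 1)/(2*π))) * dotp at' astar
        + (ηa/(2*π)) * ((∑ j, astar j)^2 - (∑ j, at' j) * (∑ j, astar j)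
            + (gker (phiAngle vstar wt) - 1) * dotp astar astar) := by
  have hπ : π ≠ 0 := Real.pi_ne_zero
  simp only [dotp, aStep, Pi.sub_apply, Pi.smul_apply, smul_eq_mul, Ga]
  simp only [sub_mul, add_mul, mul_assoc, mul_sub, mul_add, Finset.sum_sub_distrib,
    Finset.sum_add_distrib, ← Finset.mul_sum, Finset.sum_const, Finset.card_univ,
    Fintype.card_fin, nsmul_eq_mul]
  rw [show (∑ j, astar j)^2 = (∑ j, astar j) * (∑ j, astar j) by ring]
  field_simp
  ring

lemma phiAngle_nonneg {p : ℕ} (vstar w : Fin p → ℝ) : 0 ≤ phiAngle vstar w :=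
  Real.arccos_nonneg _

lemma phiAngle_le_pi {p : ℕ} (vstar w : Fin p → ℝ) : phiAngle vstar w ≤ π :=
  Real.arccos_le_pi _

lemma dotp_sub_right {n : ℕ} (u v w : Fin n → ℝ) :
    dotp w (u - v) = dotp w u - dotp w v := by
  simp [dotp, mul_sub, Finset.sum_sub_distrib]

lemma dotp_lin1 {n : ℕ} (v vs : Fin n → ℝ) (m : ℝ) (hv : dotp v v = 1) (hvs : dotp vs vs = 1) :
    dotp (v + m • (vs - dotp v vs • v)) vs = dotp v vs + m * (1 - dotp v vs ^ 2) := by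
  have hsymm : dotp vs v = dotp v vs := dotp_comm _ _
  simp only [dotp_add_left, dotp_sub_left, dotp_smul_left, hv, hvs, hsymm]
  ring

lemma dotp_lin2 {n : ℕ} (v vs : Fin n → ℝ) (m : ℝ) (hv : dotp v v = 1) (hvs : dotp vs vs = 1) :
    dotp (v + m • (vs - dotp v vs • v)) (v + m • (vs - dotp v vs • v))
      = 1 + m ^ 2 * (1 - dotp v vs ^ 2) := by
  have hsymm : dotp vs v = dotp v vs := dotp_comm _ _
  simp only [dotp_add_left, dotp_add_right, dotp_sub_left, dotp_sub_right,
    dotp_smul_left, dotp_smul_right, hv, hvs, hsymm]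
  ring

end SI

set_option maxHeartbeats 2000000 in
/-- Theorem, Stage I: avoiding the spurious local optimum. Under the shortcut prior,
there are constants `C, c₁, c₂ > 0` depending only on `‖a*‖₂` and `|𝟙ᵀa*|` such that,
with `η_a = π/(20(k+π−1)²)` and `η_w = C‖a*‖₂²η_a²`, starting from `w_0 = 0` and
`‖a_0‖₂ ≤ |𝟙ᵀa*|/√k`, for every `t` with `c₁/η_a ≤ t ≤ c₂/η_a²` one has
`φ_t ≤ 5π/12` and `(1/5)‖a*‖₂² ≤ a_tᵀa* ≤ 3‖a*‖₂² + 2(𝟙ᵀa*)²`. -/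
theorem stmt10 :
    ∀ R S : ℝ, ∃ C > (0 : ℝ), ∃ c₁ > (0 : ℝ), ∃ c₂ > (0 : ℝ),
      ∀ (p k : ℕ), 0 < p → 0 < k →
      ∀ (vstar wstar : Fin p → ℝ) (astar : Fin k → ℝ),
        nrm vstar = 1 → vstar = sc p + wstar → nrm wstar ≤ 1 → astar ≠ 0 →
        nrm astar = R → |∑ j, astar j| = S →
      ∀ ηa ηw : ℝ, ηa = π / (20 * (k + π - 1) ^ 2) → ηw = C * nrm astar ^ 2 * ηa ^ 2 →
      ∀ (w : ℕ → Fin p → ℝ) (a : ℕ → Fin k → ℝ),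
        w 0 = 0 → nrm (a 0) ≤ |∑ j, astar j| / Real.sqrt k →
        (∀ t, w (t + 1) = wStep vstar astar ηw (w t) (a t)) →
        (∀ t, a (t + 1) = aStep vstar astar ηa (w t) (a t)) →
      ∀ t : ℕ, c₁ / ηa ≤ (t : ℝ) → (t : ℝ) ≤ c₂ / ηa ^ 2 →
        phiAngle vstar (w t) ≤ 5 * π / 12 ∧
        (1 / 5) * dotp astar astar ≤ dotp (a t) astar ∧
        dotp (a t) astar ≤ 3 * dotp astar astar + 2 * (∑ j, astar j) ^ 2 := by
  intro R S
  refine ⟨1/(10*(1+R^2)*(1+2*R^2+S^2)), by positivity,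
    3*Real.log (40*(2*R^2+S^2)/R^2) + 3, ?_, 1, one_pos, ?_⟩
  · have hlog : 0 ≤ Real.log (40*(2*R^2+S^2)/R^2) := by
      rcases eq_or_ne R 0 with h|h
      · simp [h]
      · have hR2 : 0 < R^2 := by positivity
        apply Real.log_nonneg
        rw [le_div_iff₀ hR2]
        nlinarith [sq_nonneg S]
    linarith
  intro p k hp hk vstar wstar astar hnv hvs hnw hast hnR hSa ηa ηw hηa hηw w a hw0 ha0
    hwrec harec t ht1 ht2
  -- basic positivity facts
  have hπ3 : (3:ℝ) < π := Real.pi_gt_three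
  have hπpos : (0:ℝ) < π := by linarith
  have hR0 : 0 ≤ R := hnR ▸ Real.sqrt_nonneg _
  have hQ : dotp astar astar = R^2 := (SI.sq_nrm astar).symm.trans (by rw [hnR])
  have hRpos : 0 < R := by
    rcases lt_or_eq_of_le hR0 with h|h
    · exact h
    · exfalso
      apply hast
      funext i
      have h0 : dotp astar astar = 0 := by rw [hQ, ← h]; ring
      have := Finset.sum_eq_zero_iff_of_nonneg
        (fun j (_ : j ∈ Finset.univ) => mul_self_nonneg (astar j)) |>.1 h0 i (Finset.mem_univ i)
      have := mul_self_eq_zero.1 this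
      simpa using this
  have hS0 : 0 ≤ S := hSa ▸ abs_nonneg _
  have hSsq : (∑ j, astar j)^2 = S^2 := by rw [← sq_abs, hSa]
  have hkR : (1:ℝ) ≤ (k:ℝ) := by exact_mod_cast hk
  have hkpi : (0:ℝ) < (k:ℝ) + π - 1 := by linarith
  have hηapos : 0 < ηa := by
    rw [hηa]; exact div_pos hπpos (by positivity)
  have hηa1 : ηa ≤ 1 := by
    rw [hηa, div_le_one (by positivity)]
    nlinarith
  have hηw0 : 0 ≤ ηw := by rw [hηw]; positivity
  -- angle kernel bounds
  have hgub : ∀ τ, gker (phiAngle vstar (w τ)) ≤ π := fun τ =>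
    SI.gker_le_pi (SI.phiAngle_nonneg _ _) (SI.phiAngle_le_pi _ _)
  have hglb : ∀ τ, -π ≤ gker (phiAngle vstar (w τ)) := fun τ =>
    SI.neg_pi_le_gker (SI.phiAngle_nonneg _ _) (SI.phiAngle_le_pi _ _)
  -- step-size composite quantities
  have hβ1 : ηa * (((k:ℝ) + π - 1)/(2*π)) ≤ 1 := by
    rw [hηa]
    have he : π/(20*((k:ℝ)+π-1)^2) * (((k:ℝ)+π-1)/(2*π)) = 1/(40*((k:ℝ)+π-1)) := by
      field_simp
      ring
    rw [he, div_le_one (by linarith)]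
    linarith
  have hβ0 : 0 ≤ ηa * (((k:ℝ) + π - 1)/(2*π)) := by positivity
  have hα0 : 0 ≤ ηa * ((π - 1)/(2*π)) := by
    apply mul_nonneg hηapos.le
    apply div_nonneg <;> linarith
  have hα1 : ηa * ((π - 1)/(2*π)) ≤ 1 := by
    have : (π-1)/(2*π) ≤ 1 := by
      rw [div_le_one (by linarith)]; linarith
    nlinarith
  -- sum of a_t is bounded by S for all t
  have hσ : ∀ τ, |∑ j, a τ j| ≤ S := by
    intro τ
    induction τ with
    | zero =>
      have hone : dotp (a 0) (fun _ => (1:ℝ)) = ∑ j, a 0 j := by simp [dotp]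
      have hnone : nrm (fun _ : Fin k => (1:ℝ)) = Real.sqrt k := by
        simp [nrm, dotp, Finset.sum_const, Finset.card_univ]
      have hcs := SI.abs_dotp_le (a 0) (fun _ => (1:ℝ))
      rw [hone, hnone] at hcs
      have hk0 : (0:ℝ) < Real.sqrt k := Real.sqrt_pos.2 (by exact_mod_cast hk)
      have h1 : nrm (a 0) * Real.sqrt k ≤ (S / Real.sqrt k) * Real.sqrt k := by
        apply mul_le_mul_of_nonneg_right _ hk0.le
        rw [← hSa]; exact ha0
      rw [div_mul_cancel₀ _ (ne_of_gt hk0)] at h1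
      linarith
    | succ τ ih =>
      rw [harec τ, SI.sum_aStep]
      set g := gker (phiAngle vstar (w τ)) with hg
      set β := ηa * (((k:ℝ) + π - 1)/(2*π)) with hβ
      have hco : |ηa * (((k:ℝ) + g - 1)/(2*π))| ≤ β := by
        rw [abs_mul, abs_of_nonneg hηapos.le, abs_div,
          abs_of_pos (by linarith : (0:ℝ) < 2*π), hβ]
        apply mul_le_mul_of_nonneg_left _ hηapos.le
        apply div_le_div_of_nonneg_right _ (by linarith)
        exact abs_le.2 ⟨by linarith [hglb τ], by linarith [hgub τ]⟩
      have h1β : 0 ≤ 1 - β := by linarith [hβ1]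
      calc |(1 - β) * (∑ j, a τ j) + ηa * (((k:ℝ) + g - 1)/(2*π)) * (∑ j, astar j)|
          ≤ |(1 - β) * (∑ j, a τ j)| + |ηa * (((k:ℝ) + g - 1)/(2*π)) * (∑ j, astar j)| :=
            abs_add_le _ _
        _ = (1-β) * |∑ j, a τ j| + |ηa * (((k:ℝ)+g-1)/(2*π))| * |∑ j, astar j| := by
            rw [abs_mul, abs_mul, abs_of_nonneg h1β]
        _ ≤ (1-β) * S + β * S := by
            apply add_le_add (mul_le_mul_of_nonneg_left ih h1β)
            exact mul_le_mul hco (le_of_eq hSa) (abs_nonneg _) (le_trans (abs_nonneg _) hco)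
        _ = S := by ring
  -- dot product of a_t with astar is bounded for all t
  have hρ0 : |dotp (a 0) astar| ≤ S * R := by
    have hcs := SI.abs_dotp_le (a 0) astar
    rw [hnR] at hcs
    have hk1 : (1:ℝ) ≤ Real.sqrt k := by
      rw [show (1:ℝ) = Real.sqrt 1 from Real.sqrt_one.symm]
      exact Real.sqrt_le_sqrt hkR
    have h2 : nrm (a 0) ≤ S := by
      refine le_trans ha0 ?_
      rw [hSa]
      exact div_le_self hS0 hk1
    calc |dotp (a 0) astar| ≤ nrm (a 0) * R := hcs
      _ ≤ S * R := mul_le_mul_of_nonneg_right h2 hR0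
  have hρ : ∀ τ, |dotp (a τ) astar| ≤ 2*R^2 + S^2 := by
    intro τ
    induction τ with
    | zero => nlinarith [sq_nonneg (R - S), hρ0]
    | succ τ ih =>
      rw [harec τ, SI.dotp_aStep]
      set g := gker (phiAngle vstar (w τ)) with hg
      set α := ηa * ((π - 1)/(2*π)) with hα
      set E := (∑ j, astar j)^2 - (∑ j, a τ j) * (∑ j, astar j) + (g - 1) * dotp astar astar
        with hE
      have hEb : |E| ≤ 2*S^2 + (π+1)*R^2 := by
        have h1 : |(∑ j, a τ j) * (∑ j, astar j)| ≤ S^2 := by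
          rw [abs_mul, hSa]
          nlinarith [hσ τ, abs_nonneg (∑ j, a τ j)]
        have h2 : |(g - 1) * dotp astar astar| ≤ (π+1)*R^2 := by
          rw [abs_mul, hQ, abs_of_nonneg (sq_nonneg R)]
          apply mul_le_mul_of_nonneg_right _ (sq_nonneg R)
          exact abs_le.2 ⟨by linarith [hglb τ], by linarith [hgub τ]⟩
        calc |E| ≤ |(∑ j, astar j)^2| + |(∑ j, a τ j) * (∑ j, astar j)| +
              |(g - 1) * dotp astar astar| := by
              rw [hE]; exact (abs_add_le _ _).trans (by gcongr; exact abs_sub _ _)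
          _ ≤ S^2 + S^2 + (π+1)*R^2 := by
              rw [hSsq, abs_of_nonneg (sq_nonneg S)]
              linarith
          _ = 2*S^2 + (π+1)*R^2 := by ring
      have h1α : 0 ≤ 1 - α := by linarith [hα1]
      have hkey : ηa/(2*π) * (2*S^2 + (π+1)*R^2) ≤ α * (2*R^2 + S^2) := by
        rw [hα]
        have h3 : 2*S^2 + (π+1)*R^2 ≤ (π-1) * (2*R^2 + S^2) := by
          nlinarith [sq_nonneg R, sq_nonneg S]
        have h4 : 0 ≤ ηa/(2*π) := by positivity
        calc ηa/(2*π) * (2*S^2 + (π+1)*R^2) ≤ ηa/(2*π) * ((π-1) * (2*R^2 + S^2)) :=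
              mul_le_mul_of_nonneg_left h3 h4
          _ = ηa * ((π-1)/(2*π)) * (2*R^2 + S^2) := by ring
      calc |(1 - α) * dotp (a τ) astar + ηa/(2*π) * E|
          ≤ |(1 - α) * dotp (a τ) astar| + |ηa/(2*π) * E| := abs_add_le _ _
        _ = (1-α) * |dotp (a τ) astar| + ηa/(2*π) * |E| := by
            rw [abs_mul, abs_mul, abs_of_nonneg h1α, abs_of_nonneg (by positivity : (0:ℝ) ≤ ηa/(2*π))]
        _ ≤ (1-α) * (2*R^2+S^2) + ηa/(2*π) * (2*S^2 + (π+1)*R^2) := by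
            apply add_le_add (mul_le_mul_of_nonneg_left ih h1α)
            exact mul_le_mul_of_nonneg_left hEb (by positivity)
        _ ≤ (1-α) * (2*R^2+S^2) + α * (2*R^2 + S^2) := by linarith [hkey]
        _ = 2*R^2 + S^2 := by ring
  -- unit norm facts
  have hvv1 : dotp vstar vstar = 1 := (SI.sq_nrm vstar).symm.trans (by rw [hnv]; norm_num)
  have hscsc : dotp (sc p) (sc p) = 1 := by
    have h1 : (1/Real.sqrt p) * (1/Real.sqrt p) = 1/(p:ℝ) := by
      rw [div_mul_div_comm, one_mul, Real.mul_self_sqrt (Nat.cast_nonneg p)]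
    have hp0 : ((p:ℝ)) ≠ 0 := by positivity
    unfold dotp sc
    rw [Finset.sum_const, Finset.card_univ, Fintype.card_fin, nsmul_eq_mul, h1,
      mul_one_div, div_self hp0]
  -- the representation of one normalized gradient step on v
  have hX : ∀ τ, sc p + (w τ - ηw • Gw vstar astar (w τ) (a τ))
      = (sc p + w τ) + (ηw * (dotp (a τ) astar * (π - phiAngle vstar (w τ)) / (2*π))) •
        (vstar - dotp (sc p + w τ) vstar • (sc p + w τ)) := by
    intro τ; funext i
    simp only [Pi.add_apply, Pi.sub_apply, Pi.smul_apply, smul_eq_mul, Gw]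
    ring
  have hvnext : ∀ τ, sc p + w (τ+1)
      = (nrm ((sc p + w τ) + (ηw * (dotp (a τ) astar * (π - phiAngle vstar (w τ)) / (2*π))) •
          (vstar - dotp (sc p + w τ) vstar • (sc p + w τ))))⁻¹ •
        ((sc p + w τ) + (ηw * (dotp (a τ) astar * (π - phiAngle vstar (w τ)) / (2*π))) •
          (vstar - dotp (sc p + w τ) vstar • (sc p + w τ))) := by
    intro τ
    rw [hwrec τ]
    show sc p + ((nrm (sc p + (w τ - ηw • Gw vstar astar (w τ) (a τ))))⁻¹ •
        (sc p + (w τ - ηw • Gw vstar astar (w τ) (a τ))) - sc p) = _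
    rw [hX τ]
    abel
  -- bound on the step scalar m
  have hB : (0:ℝ) < 2*R^2 + S^2 := by nlinarith only [sq_nonneg S, pow_pos hRpos 2]
  have hD : ηw * ((2*R^2+S^2)/2) ≤ ηa^2/20 := by
    rw [hηw, hnR]
    have e : (1/(10*(1+R^2)*(1+2*R^2+S^2)))*R^2 * ((2*R^2+S^2)/2)
        = (R^2*(2*R^2+S^2))/(20*((1+R^2)*(1+2*R^2+S^2))) := by
      field_simp
      ring
    have key : (1/(10*(1+R^2)*(1+2*R^2+S^2)))*R^2 * ((2*R^2+S^2)/2) ≤ 1/20 := by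
      rw [e, div_le_div_iff₀ (by positivity) (by norm_num : (0:ℝ) < 20)]
      nlinarith [sq_nonneg R, sq_nonneg S, sq_nonneg (R*S), sq_nonneg (R*R)]
    calc 1/(10*(1+R^2)*(1+2*R^2+S^2)) * R^2 * ηa^2 * ((2*R^2+S^2)/2)
        = ηa^2 * ((1/(10*(1+R^2)*(1+2*R^2+S^2)))*R^2 * ((2*R^2+S^2)/2)) := by ring
      _ ≤ ηa^2 * (1/20) := mul_le_mul_of_nonneg_left key (sq_nonneg ηa)
      _ = ηa^2/20 := by ring
  have hmD : ∀ τ, |ηw * (dotp (a τ) astar * (π - phiAngle vstar (w τ)) / (2*π))| ≤ ηa^2/20 := by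
    intro τ
    have hφ1 : 0 ≤ π - phiAngle vstar (w τ) := by linarith [SI.phiAngle_le_pi vstar (w τ)]
    have hφ2 : π - phiAngle vstar (w τ) ≤ π := by linarith [SI.phiAngle_nonneg vstar (w τ)]
    have h2π : (0:ℝ) < 2*π := by linarith
    have e : |ηw * (dotp (a τ) astar * (π - phiAngle vstar (w τ)) / (2*π))|
        = ηw * (|dotp (a τ) astar| * (π - phiAngle vstar (w τ)) / (2*π)) := by
      rw [abs_mul, abs_of_nonneg hηw0, abs_div, abs_mul, abs_of_nonneg hφ1, abs_of_pos h2π]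
    rw [e]
    have h1 : |dotp (a τ) astar| * (π - phiAngle vstar (w τ)) ≤ (2*R^2+S^2) * π :=
      mul_le_mul (hρ τ) hφ2 hφ1 hB.le
    have h2 : |dotp (a τ) astar| * (π - phiAngle vstar (w τ)) / (2*π) ≤ (2*R^2+S^2)/2 := by
      calc |dotp (a τ) astar| * (π - phiAngle vstar (w τ)) / (2*π)
          ≤ (2*R^2+S^2) * π / (2*π) := by
            apply div_le_div_of_nonneg_right h1 h2π.le
        _ = (2*R^2+S^2)/2 := by field_simp
    calc ηw * (|dotp (a τ) astar| * (π - phiAngle vstar (w τ)) / (2*π))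
        ≤ ηw * ((2*R^2+S^2)/2) := mul_le_mul_of_nonneg_left h2 hηw0
      _ ≤ ηa^2/20 := hD
  -- key one-step lemma for the angle
  have hkey : ∀ τ, dotp (sc p + w τ) (sc p + w τ) = 1 →
      dotp (sc p + w (τ+1)) (sc p + w (τ+1)) = 1 ∧
      dotp (sc p + w τ) vstar - 2*(ηa^2/20) ≤ dotp (sc p + w (τ+1)) vstar := by
    intro τ hu
    set v := sc p + w τ with hv
    set m := ηw * (dotp (a τ) astar * (π - phiAngle vstar (w τ)) / (2*π)) with hm
    set γ := dotp v vstar with hγdef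
    have hγle : |γ| ≤ 1 := by
      have hcs := SI.abs_dotp_le v vstar
      have h1 : nrm v = 1 := by rw [nrm, hu, Real.sqrt_one]
      have h2 : nrm vstar = 1 := by rw [nrm, hvv1, Real.sqrt_one]
      rw [h1, h2] at hcs
      linarith [hcs]
    have habs := abs_le.1 hγle
    have h1γ : 0 ≤ 1 - γ^2 := by
      nlinarith only [habs.1, habs.2, mul_nonneg (sub_nonneg.2 habs.2) (by linarith only [habs.1] : (0:ℝ) ≤ 1 + γ)]
    have hd1 : dotp (v + m • (vstar - γ • v)) vstar = γ + m * (1 - γ^2) :=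
      SI.dotp_lin1 v vstar m hu hvv1
    have hd2 : dotp (v + m • (vstar - γ • v)) (v + m • (vstar - γ • v))
        = 1 + m^2 * (1 - γ^2) := SI.dotp_lin2 v vstar m hu hvv1
    have hq1 : (1:ℝ) ≤ 1 + m^2 * (1 - γ^2) := by nlinarith only [mul_nonneg (sq_nonneg m) h1γ]
    have hqpos : (0:ℝ) < 1 + m^2 * (1 - γ^2) := by linarith only [hq1]
    have hnX : nrm (v + m • (vstar - γ • v)) = Real.sqrt (1 + m^2 * (1 - γ^2)) := by
      rw [nrm, hd2]
    constructor
    · rw [hvnext τ, SI.dotp_smul_left, SI.dotp_smul_right, hd2, hnX]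
      have hs0 : Real.sqrt (1 + m^2 * (1 - γ^2)) ≠ 0 :=
        ne_of_gt (Real.sqrt_pos.2 hqpos)
      field_simp
      exact (Real.sq_sqrt hqpos.le).symm
    · rw [hvnext τ, SI.dotp_smul_left, hd1, hnX, inv_mul_eq_div]
      have hmle := hmD τ
      rw [← hm] at hmle
      have hD1 : ηa^2/20 ≤ 1 := by
        nlinarith only [hηapos.le, hηa1, mul_nonneg hηapos.le (sub_nonneg.2 hηa1)]
      have hE1 : |m * (1-γ^2)| ≤ ηa^2/20 := by
        rw [abs_mul, abs_of_nonneg h1γ]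
        have h10 : |m| * (1-γ^2) ≤ |m| * 1 :=
          mul_le_mul_of_nonneg_left (by linarith only [sq_nonneg γ] : 1-γ^2 ≤ 1) (abs_nonneg m)
        linarith only [h10, hmle]
      have hE2 : 0 ≤ m^2 * (1-γ^2) := mul_nonneg (sq_nonneg m) h1γ
      have hE3 : m^2 * (1-γ^2) ≤ (ηa^2/20)^2 := by
        have h9 : m^2 ≤ (ηa^2/20)^2 := by
          rw [← sq_abs m]
          exact pow_le_pow_left₀ (abs_nonneg m) hmle 2
        have h10 : m^2*(1-γ^2) ≤ m^2*1 :=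
          mul_le_mul_of_nonneg_left (by linarith only [sq_nonneg γ]) (sq_nonneg m)
        linarith only [h9, h10]
      exact SI.step_lb hγle hE1 hE2 hE3 hD1
  -- lower bound for the alignment γ_t, with unit norm invariant
  have hγlb : ∀ τ : ℕ, dotp (sc p + w τ) (sc p + w τ) = 1 ∧
      1/2 - (ηa^2/10)*(τ:ℝ) ≤ dotp (sc p + w τ) vstar := by
    intro τ
    induction τ with
    | zero =>
      rw [hw0, add_zero]
      constructor
      · exact hscsc
      · have hww : dotp wstar wstar ≤ 1 := by
          rw [← SI.sq_nrm wstar]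
          have h0 : 0 ≤ nrm wstar := Real.sqrt_nonneg _
          nlinarith only [h0, hnw, mul_nonneg h0 (sub_nonneg.2 hnw)]
        have hexp : dotp vstar vstar
            = dotp (sc p) (sc p) + 2 * dotp (sc p) wstar + dotp wstar wstar := by
          rw [hvs, SI.dotp_add_left, SI.dotp_add_right, SI.dotp_add_right,
            SI.dotp_comm wstar (sc p)]
          ring
        have hscw : dotp (sc p) wstar = -(dotp wstar wstar)/2 := by
          rw [hvv1, hscsc] at hexp
          linarith
        have : dotp (sc p) vstar = 1 + dotp (sc p) wstar := by
          rw [hvs, SI.dotp_add_right, hscsc]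
        rw [this, hscw]
        push_cast
        linarith
    | succ τ ih =>
      obtain ⟨ih1, ih2⟩ := ih
      obtain ⟨h1, h2⟩ := hkey τ ih1
      refine ⟨h1, ?_⟩
      push_cast
      linarith
  have hγ25 : ∀ n : ℕ, (n:ℝ) ≤ 1/ηa^2 → 2/5 ≤ dotp (sc p + w n) vstar := by
    intro n hn
    have h1 := (hγlb n).2
    have h2 : (ηa^2/10)*(n:ℝ) ≤ 1/10 := by
      have h3 : (ηa^2/10)*(n:ℝ) ≤ (ηa^2/10)*(1/ηa^2) :=
        mul_le_mul_of_nonneg_left hn (by positivity)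
      have h4 : (ηa^2/10)*(1/ηa^2) = 1/10 := by
        have hne : ηa ≠ 0 := ne_of_gt hηapos
        field_simp
      linarith
    linarith
  have hγle1 : ∀ n : ℕ, |dotp (sc p + w n) vstar| ≤ 1 := by
    intro n
    have hcs := SI.abs_dotp_le (sc p + w n) vstar
    have h1 : nrm (sc p + w n) = 1 := by rw [nrm, (hγlb n).1, Real.sqrt_one]
    have h2 : nrm vstar = 1 := by rw [nrm, hvv1, Real.sqrt_one]
    rw [h1, h2] at hcs
    linarith
  -- lower bound for the kernel g along the trajectory
  have hglow : ∀ τ : ℕ, (τ:ℝ) ≤ 1/ηa^2 →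
      1 + (9/40)*(π-1) ≤ gker (phiAngle vstar (w τ)) := by
    intro τ hτ
    have h25 := hγ25 τ hτ
    have h1 : dotp (sc p + w τ) vstar ≤ 1 := (abs_le.1 (hγle1 τ)).2
    exact SI.gker_arccos_ge h25 h1
  -- the contraction estimate for ρ_t
  have hmono : ∀ τ : ℕ, (τ:ℝ) ≤ (t:ℝ) →
      (1 - ηa*((π-1)/(2*π)))^τ * (dotp (a 0) astar - (9/40)*R^2)
        ≤ dotp (a τ) astar - (9/40)*R^2 := by
    intro τ
    induction τ with
    | zero => intro _; simp
    | succ τ ih =>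
      intro hτ1
      have hτt : (τ:ℝ) ≤ (t:ℝ) := by
        have : (τ:ℝ) ≤ (τ:ℝ) + 1 := by linarith
        calc (τ:ℝ) ≤ ((τ+1:ℕ):ℝ) := by push_cast; linarith
          _ ≤ (t:ℝ) := hτ1
      have ihh := ih hτt
      have hτT : (τ:ℝ) ≤ 1/ηa^2 := le_trans hτt ht2
      have hg := hglow τ hτT
      rw [harec τ, SI.dotp_aStep]
      have hbr : ηa*((π-1)/(2*π)) * ((9/40)*R^2) ≤
          ηa/(2*π) * ((∑ j, astar j)^2 - (∑ j, a τ j)*(∑ j, astar j)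
            + (gker (phiAngle vstar (w τ)) - 1)*dotp astar astar) := by
        have h1 : (∑ j, a τ j)*(∑ j, astar j) ≤ S^2 := by
          calc (∑ j, a τ j)*(∑ j, astar j) ≤ |(∑ j, a τ j)*(∑ j, astar j)| := le_abs_self _
            _ = |∑ j, a τ j| * |∑ j, astar j| := abs_mul _ _
            _ ≤ S * S := mul_le_mul (hσ τ) (le_of_eq hSa) (abs_nonneg _) hS0
            _ = S^2 := by ring
        have h2 : (9/40)*(π-1)*R^2 ≤ (gker (phiAngle vstar (w τ)) - 1)*dotp astar astar := by
          rw [hQ]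
          apply mul_le_mul_of_nonneg_right _ (sq_nonneg R)
          linarith
        have h3 : 0 ≤ ηa/(2*π) := by positivity
        calc ηa*((π-1)/(2*π)) * ((9/40)*R^2) = ηa/(2*π) * ((9/40)*(π-1)*R^2) := by ring
          _ ≤ ηa/(2*π) * ((∑ j, astar j)^2 - (∑ j, a τ j)*(∑ j, astar j)
              + (gker (phiAngle vstar (w τ)) - 1)*dotp astar astar) := by
              apply mul_le_mul_of_nonneg_left _ h3
              rw [hSsq]
              linarith
      have h1α : 0 ≤ 1 - ηa*((π-1)/(2*π)) := by linarith [hα1]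
      calc (1 - ηa*((π-1)/(2*π)))^(τ+1) * (dotp (a 0) astar - (9/40)*R^2)
          = (1 - ηa*((π-1)/(2*π))) *
            ((1 - ηa*((π-1)/(2*π)))^τ * (dotp (a 0) astar - (9/40)*R^2)) := by ring
        _ ≤ (1 - ηa*((π-1)/(2*π))) * (dotp (a τ) astar - (9/40)*R^2) :=
            mul_le_mul_of_nonneg_left ihh h1α
        _ ≤ (1 - ηa * ((π - 1)/(2*π))) * dotp (a τ) astar
            + ηa/(2*π) * ((∑ j, astar j)^2 - (∑ j, a τ j)*(∑ j, astar j)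
              + (gker (phiAngle vstar (w τ)) - 1)*dotp astar astar) - (9/40)*R^2 := by
            linarith [hbr]
  -- final power bound
  have hlog : 0 ≤ Real.log (40*(2*R^2+S^2)/R^2) := by
    apply Real.log_nonneg
    rw [le_div_iff₀ (pow_pos hRpos 2)]
    nlinarith only [sq_nonneg S, pow_pos hRpos 2]
  have harg : (0:ℝ) < 40*(2*R^2+S^2)/R^2 := div_pos (by linarith) (pow_pos hRpos 2)
  have hηat : 3*Real.log (40*(2*R^2+S^2)/R^2) + 3 ≤ ηa * t := by
    rw [div_le_iff₀ hηapos] at ht1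
    linarith [ht1]
  have hpow : (1 - ηa*((π-1)/(2*π)))^t ≤ R^2/(40*(2*R^2+S^2)) := by
    have h1α : 0 ≤ 1 - ηa*((π-1)/(2*π)) := by linarith [hα1]
    have h1 : (1 - ηa*((π-1)/(2*π))) ≤ Real.exp (-(ηa*((π-1)/(2*π)))) := by
      linarith [Real.add_one_le_exp (-(ηa*((π-1)/(2*π))))]
    have h2 : (1 - ηa*((π-1)/(2*π)))^t ≤ Real.exp (-(ηa*((π-1)/(2*π))))^t :=
      pow_le_pow_left₀ h1α h1 t
    have h3 : Real.exp (-(ηa*((π-1)/(2*π))))^t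
        = Real.exp ((t:ℝ) * (-(ηa*((π-1)/(2*π))))) := (Real.exp_nat_mul _ t).symm
    have hfrac : (1:ℝ)/3 ≤ (π-1)/(2*π) := by
      rw [div_le_div_iff₀ (by norm_num) (by linarith)]
      linarith
    have h4 : Real.log (40*(2*R^2+S^2)/R^2) ≤ (t:ℝ) * (ηa*((π-1)/(2*π))) := by
      have h5 : (3*Real.log (40*(2*R^2+S^2)/R^2) + 3) * (1/3) ≤ (ηa*t) * ((π-1)/(2*π)) := by
        apply mul_le_mul hηat hfrac (by norm_num) (by linarith)
      calc Real.log (40*(2*R^2+S^2)/R^2)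
          ≤ (3*Real.log (40*(2*R^2+S^2)/R^2) + 3) * (1/3) := by linarith
        _ ≤ (ηa*t) * ((π-1)/(2*π)) := h5
        _ = (t:ℝ) * (ηa*((π-1)/(2*π))) := by ring
    calc (1 - ηa*((π-1)/(2*π)))^t ≤ Real.exp ((t:ℝ) * (-(ηa*((π-1)/(2*π))))) := by
          rw [← h3]; exact h2
      _ ≤ Real.exp (-(Real.log (40*(2*R^2+S^2)/R^2))) := by
          apply Real.exp_le_exp.2
          linarith [h4]
      _ = (40*(2*R^2+S^2)/R^2)⁻¹ := by rw [Real.exp_neg, Real.exp_log harg]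
      _ = R^2/(40*(2*R^2+S^2)) := by rw [inv_div]
  -- assemble the three conclusions
  refine ⟨?_, ?_, ?_⟩
  · -- φ_t ≤ 5π/12
    have h25 := hγ25 t ht2
    have h1t : dotp (sc p + w t) vstar ≤ 1 := (abs_le.1 (hγle1 t)).2
    have hm1t : -1 ≤ dotp (sc p + w t) vstar := (abs_le.1 (hγle1 t)).1
    show Real.arccos (dotp (sc p + w t) vstar) ≤ 5*π/12
    rw [Real.arccos_eq_pi_div_two_sub_arcsin]
    have harc : π/12 ≤ Real.arcsin (dotp (sc p + w t) vstar) := by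
      apply (Real.le_arcsin_iff_sin_le ?_ ?_).2
      · have hsinle : Real.sin (π/12) ≤ π/12 := Real.sin_le (by positivity)
        have : π/12 ≤ 1/3 := by linarith [Real.pi_le_four]
        linarith
      · constructor <;> [linarith [hπpos]; linarith [hπpos]]
      · exact ⟨hm1t, h1t⟩
    linarith
  · -- lower bound for a_tᵀa*
    have hfin := hmono t le_rfl
    have hlow : -(2*R^2+S^2) ≤ dotp (a 0) astar - (9/40)*R^2 := by
      have h := abs_le.1 hρ0
      nlinarith only [h.1, sq_nonneg (R-S)]
    have h1α : 0 ≤ 1 - ηa*((π-1)/(2*π)) := by linarith [hα1]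
    have hp0 : 0 ≤ (1 - ηa*((π-1)/(2*π)))^t := pow_nonneg h1α t
    have h5 : (1 - ηa*((π-1)/(2*π)))^t * (-(2*R^2+S^2))
        ≤ (1 - ηa*((π-1)/(2*π)))^t * (dotp (a 0) astar - (9/40)*R^2) :=
      mul_le_mul_of_nonneg_left hlow hp0
    have h6 : (1 - ηa*((π-1)/(2*π)))^t * (2*R^2+S^2) ≤ (R^2/(40*(2*R^2+S^2))) * (2*R^2+S^2) :=
      mul_le_mul_of_nonneg_right hpow hB.le
    have h7 : (R^2/(40*(2*R^2+S^2))) * (2*R^2+S^2) = R^2/40 := by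
      field_simp
    rw [hQ]
    linarith [hfin, h5, h6, h7]
  · -- upper bound for a_tᵀa*
    rw [hQ, hSsq]
    have := abs_le.1 (hρ t)
    linarith [this.2, sq_nonneg R, sq_nonneg S]
end
end

section
/- (Theorem: invariance of the basin of attraction in Stage II.) Assume the shortcut prior v* = 𝟙/√p + w* with ‖w*‖₂ ≤ 1 and a* ≠ 0. Set m = (1/5)‖a*‖₂² and M = 3‖a*‖₂² + 2(𝟙ᵀa*)². Let (w_t, a_t) be the gradient descent iterates with normalization with m ≤ a_0ᵀa* ≤ M, φ_0 ≤ 5π/12, step sizes η_w ≤ m/M² and η_a < 2π/(k+π−1), and suppose −3(𝟙ᵀa*)² ≤ (𝟙ᵀa*)(𝟙ᵀa_t) − (𝟙ᵀa*)² ≤ 0 holds for all t. Then for all t ≥ 0, φ_t ≤ 5π/12 and m ≤ a_tᵀa* ≤ M. -/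
open Real
open scoped BigOperators

noncomputable section

namespace Stmt12Aux

lemma dotp_self_nonneg {n : ℕ} (u : Fin n → ℝ) : 0 ≤ dotp u u :=
  Finset.sum_nonneg fun _ _ => mul_self_nonneg _

lemma sq_nrm {n : ℕ} (u : Fin n → ℝ) : nrm u ^ 2 = dotp u u :=
  Real.sq_sqrt (dotp_self_nonneg u)

lemma dotp_self_eq_one {n : ℕ} {u : Fin n → ℝ} (h : nrm u = 1) : dotp u u = 1 :=
  Real.sqrt_eq_one.mp h

lemma dotp_sq_le {n : ℕ} (u v : Fin n → ℝ) : (dotp u v) ^ 2 ≤ dotp u u * dotp v v := by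
  simpa only [dotp, pow_two] using Finset.sum_mul_sq_le_sq_mul_sq Finset.univ u v

lemma nrm_smul {n : ℕ} (r : ℝ) (u : Fin n → ℝ) : nrm (r • u) = |r| * nrm u := by
  simp only [nrm, dotp, Pi.smul_apply, smul_eq_mul]
  rw [show ∑ i, r * u i * (r * u i) = r ^ 2 * ∑ i, u i * u i by
    rw [Finset.mul_sum]; exact Finset.sum_congr rfl fun i _ => by ring]
  rw [Real.sqrt_mul (sq_nonneg r), Real.sqrt_sq_eq_abs]

lemma dotp_smul_left {n : ℕ} (r : ℝ) (u v : Fin n → ℝ) : dotp (r • u) v = r * dotp u v := by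
  simp only [dotp, Pi.smul_apply, smul_eq_mul, Finset.mul_sum, mul_assoc]

lemma expand1 {n : ℕ} (v vs : Fin n → ℝ) (s c : ℝ) :
    dotp (v + s • (vs - c • v)) vs
      = dotp v vs + s * (dotp vs vs - c * dotp v vs) := by
  simp only [dotp, Pi.add_apply, Pi.sub_apply, Pi.smul_apply, smul_eq_mul]
  rw [Finset.sum_congr rfl (fun i _ => show (v i + s * (vs i - c * v i)) * vs i
      = v i * vs i + s * (vs i * vs i) - s * c * (v i * vs i) from by ring)]
  rw [Finset.sum_sub_distrib, Finset.sum_add_distrib, ← Finset.mul_sum, ← Finset.mul_sum]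
  ring

lemma expand2 {n : ℕ} (v vs : Fin n → ℝ) (s c : ℝ) :
    dotp (v + s • (vs - c • v)) (v + s • (vs - c • v))
      = (1 - 2*s*c + s^2*c^2) * dotp v v + (2*s - 2*s^2*c) * dotp v vs
        + s^2 * dotp vs vs := by
  simp only [dotp, Pi.add_apply, Pi.sub_apply, Pi.smul_apply, smul_eq_mul]
  rw [Finset.sum_congr rfl (fun i _ =>
    show (v i + s * (vs i - c * v i)) * (v i + s * (vs i - c * v i))
      = (1 - 2*s*c + s^2*c^2) * (v i * v i) + (2*s - 2*s^2*c) * (v i * vs i)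
        + s^2 * (vs i * vs i) from by ring)]
  rw [Finset.sum_add_distrib, Finset.sum_add_distrib, ← Finset.mul_sum, ← Finset.mul_sum,
    ← Finset.mul_sum]

lemma gker_hasDerivAt (x : ℝ) : HasDerivAt gker (-((π - x) * Real.sin x)) x := by
  have h1 : HasDerivAt (fun y : ℝ => (π - y) * Real.cos y)
      ((0 - 1) * Real.cos x + (π - x) * (-Real.sin x)) x :=
    ((hasDerivAt_const x π).sub (hasDerivAt_id x)).mul (Real.hasDerivAt_cos x)
  have h2 := h1.add (Real.hasDerivAt_sin x)
  have h3 : (0 - 1) * Real.cos x + (π - x) * (-Real.sin x) + Real.cos x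
      = -((π - x) * Real.sin x) := by ring
  rw [h3] at h2
  exact h2

lemma gker_anti : AntitoneOn gker (Set.Icc 0 π) := by
  apply antitoneOn_of_deriv_nonpos (convex_Icc 0 π)
  · have h : Continuous gker := by
      have h2 : gker = fun y => (π - y) * Real.cos y + Real.sin y := rfl
      rw [h2]; fun_prop
    exact h.continuousOn
  · exact fun x _ => (gker_hasDerivAt x).differentiableAt.differentiableWithinAt
  · intro x hx
    rw [interior_Icc] at hx
    rw [(gker_hasDerivAt x).deriv]
    have hs := Real.sin_nonneg_of_nonneg_of_le_pi hx.1.le hx.2.le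
    nlinarith [hx.2]

lemma gker_le_pi {x : ℝ} (h0 : 0 ≤ x) (h1 : x ≤ π) : gker x ≤ π := by
  have h := gker_anti (Set.left_mem_Icc.2 Real.pi_pos.le) ⟨h0, h1⟩ h0
  simpa [gker] using h

lemma cos_5pi12 : Real.cos (5*π/12) = (Real.sqrt 6 - Real.sqrt 2)/4 := by
  have h : (5*π/12 : ℝ) = π/4 + π/6 := by ring
  rw [h, Real.cos_add, Real.cos_pi_div_four, Real.cos_pi_div_six,
    Real.sin_pi_div_four, Real.sin_pi_div_six]
  have h6 : Real.sqrt 6 = Real.sqrt 2 * Real.sqrt 3 := by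
    rw [← Real.sqrt_mul (by norm_num : (0:ℝ) ≤ 2)]; norm_num
  rw [h6]; ring

lemma sin_5pi12 : Real.sin (5*π/12) = (Real.sqrt 6 + Real.sqrt 2)/4 := by
  have h : (5*π/12 : ℝ) = π/4 + π/6 := by ring
  rw [h, Real.sin_add, Real.cos_pi_div_four, Real.cos_pi_div_six,
    Real.sin_pi_div_four, Real.sin_pi_div_six]
  have h6 : Real.sqrt 6 = Real.sqrt 2 * Real.sqrt 3 := by
    rw [← Real.sqrt_mul (by norm_num : (0:ℝ) ≤ 2)]; norm_num
  rw [h6]; ring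

lemma sqrt6_lb : (2.449:ℝ) ≤ Real.sqrt 6 := by
  nlinarith [Real.sq_sqrt (by norm_num : (0:ℝ) ≤ 6), Real.sqrt_nonneg 6]

lemma sqrt6_ub : Real.sqrt 6 ≤ 2.4495 := by
  nlinarith [Real.sq_sqrt (by norm_num : (0:ℝ) ≤ 6), Real.sqrt_nonneg 6]

lemma sqrt2_lb : (1.414:ℝ) ≤ Real.sqrt 2 := by
  nlinarith [Real.sq_sqrt (by norm_num : (0:ℝ) ≤ 2), Real.sqrt_nonneg 2]

lemma sqrt2_ub : Real.sqrt 2 ≤ 1.41422 := by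
  nlinarith [Real.sq_sqrt (by norm_num : (0:ℝ) ≤ 2), Real.sqrt_nonneg 2]

lemma cos512_ge : (1:ℝ)/4 ≤ Real.cos (5*π/12) := by
  rw [cos_5pi12]
  nlinarith [sqrt6_lb, sqrt2_ub]

lemma gnum : (π - 1)/5 + 1 ≤ gker (5*π/12) := by
  rw [gker, cos_5pi12, sin_5pi12]
  have hπl := Real.pi_gt_d4
  have hπu := Real.pi_lt_d2
  nlinarith [sqrt6_lb, sqrt6_ub, sqrt2_lb, sqrt2_ub,
    mul_nonneg (sub_nonneg.2 hπl.le) (sub_nonneg.2 sqrt6_lb),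
    mul_nonneg (sub_nonneg.2 hπl.le) (sub_nonneg.2 sqrt2_lb),
    mul_nonneg (sub_nonneg.2 hπu.le) (sub_nonneg.2 sqrt2_ub),
    mul_nonneg (sub_nonneg.2 hπu.le) (sub_nonneg.2 sqrt6_ub)]

lemma dotp_Ga {p k : ℕ} (vstar : Fin p → ℝ) (astar : Fin k → ℝ)
    (w : Fin p → ℝ) (a : Fin k → ℝ) :
    dotp (Ga vstar astar w a) astar
      = (1/(2*π)) * ((∑ j, a j) * (∑ j, astar j) + (π - 1) * dotp a astar
          - (∑ j, astar j)^2 - (gker (phiAngle vstar w) - 1) * dotp astar astar) := by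
  simp only [dotp, Ga]
  rw [Finset.sum_congr rfl (fun i _ => show
      ((1 / (2 * π)) * ((∑ j, a j) + (π - 1) * a i)
        - (1 / (2 * π)) * ((∑ j, astar j) + (gker (phiAngle vstar w) - 1) * astar i)) * astar i
      = (1/(2*π)) * ((∑ j, a j) * astar i) + ((π-1)/(2*π)) * (a i * astar i)
        - (1/(2*π)) * ((∑ j, astar j) * astar i)
        - ((gker (phiAngle vstar w) - 1)/(2*π)) * (astar i * astar i) from by ring)]
  rw [Finset.sum_sub_distrib, Finset.sum_sub_distrib, Finset.sum_add_distrib,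
    ← Finset.mul_sum, ← Finset.mul_sum, ← Finset.mul_sum, ← Finset.mul_sum,
    ← Finset.mul_sum, ← Finset.mul_sum]
  ring


lemma abs_le_one_of_sq {x : ℝ} (h : x^2 ≤ 1) : -1 ≤ x ∧ x ≤ 1 :=
  ⟨by nlinarith, by nlinarith⟩

lemma n2pos {s c : ℝ} (h : c^2 ≤ 1) : 0 < 1 + s^2*(1-c^2) := by
  nlinarith [mul_nonneg (sq_nonneg s) (show (0:ℝ) ≤ 1 - c^2 by linarith)]

lemma a_lower (pi ea m A g D Dn X : ℝ)
    (hpi : 3 < pi) (hea : 0 < ea) (heaπ : ea * (pi - 1) < 2*pi)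
    (hA : 0 < A) (hm : m = 1/5 * A)
    (hgl : (pi-1)/5 + 1 ≤ g)
    (hD : m ≤ D) (hX : X ≤ 0)
    (hexp : 2*pi*Dn = 2*pi*D - ea * (X + (pi-1)*D - (g-1)*A)) :
    m ≤ Dn := by
  have hb1 : 0 ≤ ea * ((g - 1) * A - (pi-1)*m) := by
    apply mul_nonneg hea.le
    nlinarith [mul_nonneg (show (0:ℝ) ≤ g - 1 - (pi-1)/5 by linarith) hA.le]
  have hb2 : 0 ≤ (D - m) * (2*pi - ea*(pi-1)) := mul_nonneg (by linarith) (by linarith)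
  have hb3 : ea * X ≤ 0 := mul_nonpos_of_nonneg_of_nonpos hea.le hX
  nlinarith [hb1, hb2, hb3]

lemma a_upper (pi ea M A g D Dn X S2 : ℝ)
    (hpi : 3 < pi) (hea : 0 < ea) (heaπ : ea * (pi - 1) < 2*pi)
    (hA : 0 < A) (hS2 : 0 ≤ S2) (hM : M = 3*A + 2*S2)
    (hg1 : g ≤ pi)
    (hD : D ≤ M) (hX : -3*S2 ≤ X)
    (hexp : 2*pi*Dn = 2*pi*D - ea * (X + (pi-1)*D - (g-1)*A)) :
    Dn ≤ M := by
  have hb1 : ea * ((g-1)*A) ≤ ea * ((pi-1)*A) :=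
    mul_le_mul_of_nonneg_left (mul_le_mul_of_nonneg_right (by linarith) hA.le) hea.le
  have hb2 : 0 ≤ (M - D) * (2*pi - ea*(pi-1)) := mul_nonneg (by linarith) (by linarith)
  have hb3 : ea * (-3*S2) ≤ ea * X := mul_le_mul_of_nonneg_left hX hea.le
  have hb4 : 0 ≤ ea * ((pi-1)*M - (pi-1)*A - 3*S2) := by
    apply mul_nonneg hea.le
    nlinarith [mul_nonneg (show (0:ℝ) ≤ pi - 3 by linarith) hA.le,
      mul_nonneg (show (0:ℝ) ≤ pi - 3 by linarith) hS2]
  nlinarith [hb1, hb2, hb3, hb4]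

lemma w_key (c s n d1 : ℝ) (hc4 : 1/4 ≤ c) (hc1 : c^2 ≤ 1)
    (hs0 : 0 ≤ s) (hs30 : s ≤ 1/30)
    (hn0 : 0 < n) (hn2 : n^2 = 1 + s^2*(1-c^2)) (hd1 : d1 = c + s*(1-c^2)) :
    c * n ≤ d1 := by
  have h1 : (0:ℝ) ≤ 1 - c^2 := by linarith
  have h2 : (0:ℝ) ≤ 2*c + s*(1-2*c^2) := by
    nlinarith [mul_le_mul_of_nonneg_left (show (-1:ℝ) ≤ 1-2*c^2 by nlinarith) hs0]
  have hsq : (c*n)^2 ≤ d1^2 := by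
    rw [mul_pow, hn2, hd1]
    nlinarith [mul_nonneg (mul_nonneg hs0 h1) h2]
  have hd1pos : 0 ≤ d1 := by
    rw [hd1]; nlinarith [mul_nonneg hs0 h1]
  nlinarith [hsq, hd1pos, mul_pos (show (0:ℝ) < c by linarith) hn0]

end Stmt12Aux

set_option maxHeartbeats 2000000 in
/-- Theorem: invariance of the basin of attraction in Stage II. With
`m = (1/5)‖a*‖₂²`, `M = 3‖a*‖₂² + 2(𝟙ᵀa*)²`, step sizes `η_w ≤ m/M²` and
`η_a < 2π/(k+π−1)`, if `m ≤ a_0ᵀa* ≤ M`, `φ_0 ≤ 5π/12`, and the `𝟙ᵀa_t` bounds hold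
for all `t`, then `φ_t ≤ 5π/12` and `m ≤ a_tᵀa* ≤ M` for all `t`. -/
theorem stmt12 (p k : ℕ) (hp : 0 < p) (hk : 0 < k)
    (vstar wstar : Fin p → ℝ) (astar : Fin k → ℝ)
    (hv : nrm vstar = 1)
    (hprior : vstar = sc p + wstar) (hwstar : nrm wstar ≤ 1) (hastar : astar ≠ 0)
    (m M : ℝ)
    (hm : m = (1 / 5) * dotp astar astar)
    (hM : M = 3 * dotp astar astar + 2 * (∑ j, astar j) ^ 2)
    (ηw ηa : ℝ) (hηw0 : 0 < ηw) (hηa0 : 0 < ηa)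
    (hηw : ηw ≤ m / M ^ 2) (hηa : ηa < 2 * π / (k + π - 1))
    (w : ℕ → Fin p → ℝ) (a : ℕ → Fin k → ℝ)
    (hv0 : nrm (sc p + w 0) = 1)
    (ha0m : m ≤ dotp (a 0) astar) (ha0M : dotp (a 0) astar ≤ M)
    (hphi0 : phiAngle vstar (w 0) ≤ 5 * π / 12)
    (hwup : ∀ t, w (t + 1) = wStep vstar astar ηw (w t) (a t))
    (haup : ∀ t, a (t + 1) = aStep vstar astar ηa (w t) (a t))
    (hsum : ∀ t, -3 * (∑ j, astar j) ^ 2 ≤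
        (∑ j, astar j) * (∑ j, a t j) - (∑ j, astar j) ^ 2 ∧
      (∑ j, astar j) * (∑ j, a t j) - (∑ j, astar j) ^ 2 ≤ 0) :
    ∀ t : ℕ, phiAngle vstar (w t) ≤ 5 * π / 12 ∧
      m ≤ dotp (a t) astar ∧ dotp (a t) astar ≤ M := by
  have hπ0 : (0:ℝ) < π := Real.pi_pos
  have hπ3 : (3:ℝ) < π := Real.pi_gt_three
  have hA0 : 0 < dotp astar astar := by
    rcases Function.ne_iff.mp hastar with ⟨i, hi⟩
    unfold dotp
    exact Finset.sum_pos' (fun j _ => mul_self_nonneg _)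
      ⟨i, Finset.mem_univ i, mul_self_pos.mpr hi⟩
  have hm0 : 0 < m := by rw [hm]; linarith
  have hM0 : 0 < M := by rw [hM]; nlinarith [sq_nonneg (∑ j, astar j)]
  have h15 : 15 * m ≤ M := by rw [hm, hM]; nlinarith [sq_nonneg (∑ j, astar j)]
  have hk1 : (1:ℝ) ≤ (k:ℝ) := by exact_mod_cast hk
  have hηaπ : ηa * (π - 1) < 2 * π := by
    have hkp : 0 < (k:ℝ) + π - 1 := by linarith
    have h := (lt_div_iff₀ hkp).mp hηa
    nlinarith
  have key : ∀ t, nrm (sc p + w t) = 1 ∧ phiAngle vstar (w t) ≤ 5*π/12 ∧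
      m ≤ dotp (a t) astar ∧ dotp (a t) astar ≤ M := by
    intro t
    induction t with
    | zero => exact ⟨hv0, hphi0, ha0m, ha0M⟩
    | succ t ih =>
      obtain ⟨hn1, hφ, ham, haM⟩ := ih
      have hvv : dotp (sc p + w t) (sc p + w t) = 1 := Stmt12Aux.dotp_self_eq_one hn1
      have hvs : dotp vstar vstar = 1 := Stmt12Aux.dotp_self_eq_one hv
      have hcs : (dotp (sc p + w t) vstar)^2 ≤ 1 := by
        have h := Stmt12Aux.dotp_sq_le (sc p + w t) vstar
        rw [hvv, hvs] at h; simpa using h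
      have hc1 : dotp (sc p + w t) vstar ≤ 1 := (Stmt12Aux.abs_le_one_of_sq hcs).2
      have hc1' : -1 ≤ dotp (sc p + w t) vstar := (Stmt12Aux.abs_le_one_of_sq hcs).1
      have hcosφ : Real.cos (phiAngle vstar (w t)) = dotp (sc p + w t) vstar :=
        Real.cos_arccos hc1' hc1
      have hφ0 : 0 ≤ phiAngle vstar (w t) := Real.arccos_nonneg _
      have hφπ : phiAngle vstar (w t) ≤ π := Real.arccos_le_pi _
      have h512a : (0:ℝ) ≤ 5*π/12 := by positivity
      have h512π : 5*π/12 ≤ π := by linarith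
      have hcl : Real.cos (5*π/12) ≤ dotp (sc p + w t) vstar := by
        rw [← hcosφ]
        exact Real.cos_le_cos_of_nonneg_of_le_pi hφ0 h512π hφ
      have hcq : (1:ℝ)/4 ≤ dotp (sc p + w t) vstar := le_trans Stmt12Aux.cos512_ge hcl
      have hgl : (π-1)/5 + 1 ≤ gker (phiAngle vstar (w t)) :=
        le_trans Stmt12Aux.gnum (Stmt12Aux.gker_anti ⟨hφ0, hφπ⟩ ⟨h512a, h512π⟩ hφ)
      have hgu : gker (phiAngle vstar (w t)) ≤ π := Stmt12Aux.gker_le_pi hφ0 hφπ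
      -- the `a` update
      have haD : dotp (a (t+1)) astar
          = dotp (a t) astar - ηa * dotp (Ga vstar astar (w t) (a t)) astar := by
        rw [haup t]
        simp only [aStep, dotp, Pi.sub_apply, Pi.smul_apply, smul_eq_mul, sub_mul,
          Finset.sum_sub_distrib, Finset.mul_sum, mul_assoc]
      rw [Stmt12Aux.dotp_Ga] at haD
      obtain ⟨hs1, hs2⟩ := hsum t
      have hexp : 2*π*(dotp (a (t+1)) astar)
          = 2*π*(dotp (a t) astar)
            - ηa * (((∑ j, astar j) * (∑ j, a t j) - (∑ j, astar j)^2)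
              + (π-1) * dotp (a t) astar
              - (gker (phiAngle vstar (w t)) - 1) * dotp astar astar) := by
        rw [haD]; field_simp; ring
      have hama : m ≤ dotp (a (t+1)) astar :=
        Stmt12Aux.a_lower π ηa m (dotp astar astar) (gker (phiAngle vstar (w t)))
          (dotp (a t) astar) (dotp (a (t+1)) astar)
          ((∑ j, astar j) * (∑ j, a t j) - (∑ j, astar j)^2)
          hπ3 hηa0 hηaπ hA0 hm hgl ham hs2 hexp
      have haMa : dotp (a (t+1)) astar ≤ M :=
        Stmt12Aux.a_upper π ηa M (dotp astar astar) (gker (phiAngle vstar (w t)))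
          (dotp (a t) astar) (dotp (a (t+1)) astar)
          ((∑ j, astar j) * (∑ j, a t j) - (∑ j, astar j)^2) ((∑ j, astar j)^2)
          hπ3 hηa0 hηaπ hA0 (sq_nonneg _) hM hgu haM hs1 hexp
      -- the `w` update
      set u : Fin p → ℝ := sc p + (w t - ηw • Gw vstar astar (w t) (a t)) with hu_def
      have hu : u = (sc p + w t)
          + (ηw * (dotp (a t) astar * (π - phiAngle vstar (w t)) / (2*π)))
            • (vstar - (dotp (sc p + w t) vstar) • (sc p + w t)) := by
        funext i
        simp only [hu_def, Gw, Pi.add_apply, Pi.sub_apply, Pi.smul_apply, smul_eq_mul]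
        ring
      have hlam0 : 0 ≤ dotp (a t) astar * (π - phiAngle vstar (w t)) / (2*π) :=
        div_nonneg (mul_nonneg (by linarith) (by linarith)) (by linarith)
      have hs0 : 0 ≤ ηw * (dotp (a t) astar * (π - phiAngle vstar (w t)) / (2*π)) :=
        mul_nonneg hηw0.le hlam0
      have hs30 : ηw * (dotp (a t) astar * (π - phiAngle vstar (w t)) / (2*π)) ≤ 1/30 := by
        have hl1 : dotp (a t) astar * (π - phiAngle vstar (w t)) / (2*π) ≤ M/2 := by
          rw [div_le_iff₀ (by linarith : (0:ℝ) < 2*π)]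
          have h := mul_le_mul haM (show π - phiAngle vstar (w t) ≤ π by linarith)
            (by linarith) hM0.le
          linarith [h]
        calc ηw * (dotp (a t) astar * (π - phiAngle vstar (w t)) / (2*π))
            ≤ (m/M^2) * (M/2) := mul_le_mul hηw hl1 hlam0 (by positivity)
          _ = m/(2*M) := by field_simp
          _ ≤ 1/30 := by
              rw [div_le_div_iff₀ (by linarith) (by norm_num)]
              linarith
      have hd1 : dotp u vstar
          = (dotp (sc p + w t) vstar)
            + (ηw * (dotp (a t) astar * (π - phiAngle vstar (w t)) / (2*π)))
              * (1 - (dotp (sc p + w t) vstar)^2) := by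
        rw [hu, Stmt12Aux.expand1, hvs]; ring
      have hd2 : dotp u u
          = 1 + (ηw * (dotp (a t) astar * (π - phiAngle vstar (w t)) / (2*π)))^2
              * (1 - (dotp (sc p + w t) vstar)^2) := by
        rw [hu, Stmt12Aux.expand2, hvv, hvs]; ring
      have hn2pos : 0 < dotp u u := by
        rw [hd2]; exact Stmt12Aux.n2pos hcs
      have hnpos : 0 < nrm u := Real.sqrt_pos.mpr hn2pos
      have hnsq : (nrm u)^2 = 1 + (ηw * (dotp (a t) astar
          * (π - phiAngle vstar (w t)) / (2*π)))^2
            * (1 - (dotp (sc p + w t) vstar)^2) := by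
        rw [Stmt12Aux.sq_nrm, hd2]
      have hv1 : sc p + w (t+1) = (nrm u)⁻¹ • u := by
        rw [hwup t]
        funext i
        simp only [wStep, ← hu_def, Pi.add_apply, Pi.sub_apply, Pi.smul_apply, smul_eq_mul]
        ring
      have hnorm1 : nrm (sc p + w (t+1)) = 1 := by
        rw [hv1, Stmt12Aux.nrm_smul, abs_of_nonneg (inv_nonneg.mpr hnpos.le),
          inv_mul_cancel₀ hnpos.ne']
      have hcn : dotp (sc p + w t) vstar * nrm u ≤ dotp u vstar :=
        Stmt12Aux.w_key (dotp (sc p + w t) vstar)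
          (ηw * (dotp (a t) astar * (π - phiAngle vstar (w t)) / (2*π)))
          (nrm u) (dotp u vstar) hcq hcs hs0 hs30 hnpos hnsq hd1
      have hxc : dotp (sc p + w t) vstar ≤ dotp (sc p + w (t+1)) vstar := by
        rw [hv1, Stmt12Aux.dotp_smul_left, inv_mul_eq_div, le_div_iff₀ hnpos]
        exact hcn
      have hphi1 : phiAngle vstar (w (t+1)) ≤ 5*π/12 := by
        have hcx : Real.cos (5*π/12) ≤ dotp (sc p + w (t+1)) vstar := le_trans hcl hxc
        have h1 : Real.arccos (dotp (sc p + w (t+1)) vstar)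
            ≤ Real.arccos (Real.cos (5*π/12)) := by
          rw [Real.arccos_eq_pi_div_two_sub_arcsin, Real.arccos_eq_pi_div_two_sub_arcsin]
          have h2 := Real.monotone_arcsin hcx
          linarith
        rw [Real.arccos_cos h512a h512π] at h1
        exact h1
      exact ⟨hnorm1, hphi1, hama, haMa⟩
  exact fun t => ⟨(key t).2.1, (key t).2.2.1, (key t).2.2.2⟩
end
end

section
/- (Partial dissipativity of G_a near the global optimum.) Write w* = v* − 𝟙/√p. Let δ > 0 and let (w,a) ∈ ℝ^p × ℝ^k satisfy ‖w + 𝟙/√p‖₂ = 1 and ‖w − w*‖₂² ≤ δ. Then ⟨−G_a(w,a), a* − a⟩ ≥ ((π−1)/(2π))‖a − a*‖₂² − (δ/4)|aᵀa* − ‖a*‖₂²|. (In the paper the error term is written as δ/5, treating ‖a*‖₂ and |𝟙ᵀa*| as constants.) -/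
open Real
open scoped BigOperators

noncomputable section

/-- Bounds on `π − g(arccos c)` for `c ∈ [−1,1]`. -/
lemma gker_bounds (c : ℝ) (h1 : -1 ≤ c) (h2 : c ≤ 1) :
    0 ≤ π - gker (Real.arccos c) ∧ π - gker (Real.arccos c) ≤ π * (1 - c) := by
  set φ := Real.arccos c with hφ
  have hφ0 : 0 ≤ φ := Real.arccos_nonneg c
  have hφπ : φ ≤ π := Real.arccos_le_pi c
  have hcos : Real.cos φ = c := Real.cos_arccos h1 h2
  have hsin0 : 0 ≤ Real.sin φ := Real.sin_nonneg_of_nonneg_of_le_pi hφ0 hφπ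
  have hsinle : Real.sin φ ≤ φ := Real.sin_le hφ0
  have htan : φ * c ≤ Real.sin φ := by
    rcases le_or_gt c 0 with h | h
    · nlinarith
    · rcases eq_or_lt_of_le hφ0 with h0 | h0
      · rw [← h0] at hsin0 ⊢
        simpa using hsin0
      · have hlt : φ < π / 2 := by
          by_contra hge
          push_neg at hge
          have hc0 : Real.cos φ ≤ 0 :=
            Real.cos_nonpos_of_pi_div_two_le_of_le hge (by linarith [Real.pi_pos])
          rw [hcos] at hc0; linarith
        have ht := Real.lt_tan h0 hlt
        have hcpos : 0 < Real.cos φ := Real.cos_pos_of_mem_Ioo ⟨by linarith, hlt⟩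
        rw [Real.tan_eq_sin_div_cos, lt_div_iff₀ hcpos] at ht
        rw [← hcos]; linarith
  constructor
  · unfold gker
    nlinarith [mul_nonneg (sub_nonneg.mpr hφπ) (sub_nonneg.mpr h2)]
  · unfold gker
    rw [hcos]; nlinarith

/-- A vector with `nrm u = 1` satisfies `dotp u u = 1`. -/
lemma dotp_self_eq_one {n : ℕ} (u : Fin n → ℝ) (h : nrm u = 1) : dotp u u = 1 := by
  unfold nrm at h
  exact Real.sqrt_eq_one.mp h

/-- Partial dissipativity of `G_a` near the global optimum, with `w* = v* − 𝟙/√p`. -/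
theorem stmt13 (p k : ℕ) (hp : 0 < p) (hk : 0 < k)
    (vstar : Fin p → ℝ) (hv : nrm vstar = 1)
    (astar : Fin k → ℝ)
    (δ : ℝ) (hδ : 0 < δ)
    (w : Fin p → ℝ) (a : Fin k → ℝ)
    (hw : nrm (w + sc p) = 1)
    (hclose : dotp (w - (vstar - sc p)) (w - (vstar - sc p)) ≤ δ) :
    ((π - 1) / (2 * π)) * dotp (a - astar) (a - astar)
        - (δ / 4) * |dotp a astar - dotp astar astar| ≤
      dotp (-(Ga vstar astar w a)) (astar - a) := by
  have hπ : (0:ℝ) < π := Real.pi_pos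
  -- abbreviations
  set c : ℝ := dotp (sc p + w) vstar with hc
  -- unit norms
  have hvv : dotp vstar vstar = 1 := dotp_self_eq_one vstar hv
  have hww : dotp (sc p + w) (sc p + w) = 1 := by
    have : dotp (w + sc p) (w + sc p) = 1 := dotp_self_eq_one _ hw
    rwa [add_comm] at this
  -- expansion of the closeness term
  have hexp : dotp (w - (vstar - sc p)) (w - (vstar - sc p))
      = dotp (sc p + w) (sc p + w) - 2 * c + dotp vstar vstar := by
    rw [hc]
    simp only [dotp, Pi.sub_apply, Pi.add_apply, Finset.mul_sum,
      ← Finset.sum_sub_distrib, ← Finset.sum_add_distrib]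
    exact Finset.sum_congr rfl fun i _ => by ring
  have hexp2 : dotp ((sc p + w) + vstar) ((sc p + w) + vstar)
      = dotp (sc p + w) (sc p + w) + 2 * c + dotp vstar vstar := by
    rw [hc]
    simp only [dotp, Pi.add_apply, Finset.mul_sum,
      ← Finset.sum_add_distrib]
    exact Finset.sum_congr rfl fun i _ => by ring
  have hnn : (0:ℝ) ≤ dotp (w - (vstar - sc p)) (w - (vstar - sc p)) :=
    Finset.sum_nonneg fun i _ => mul_self_nonneg _
  have hnn2 : (0:ℝ) ≤ dotp ((sc p + w) + vstar) ((sc p + w) + vstar) :=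
    Finset.sum_nonneg fun i _ => mul_self_nonneg _
  have hc1 : c ≤ 1 := by rw [hexp, hvv, hww] at hnn; linarith
  have hcm1 : -1 ≤ c := by rw [hexp2, hvv, hww] at hnn2; linarith
  have hcδ : 1 - c ≤ δ / 2 := by
    rw [hexp, hvv, hww] at hclose; linarith
  -- bounds on N = π − g(φ)
  have hphi : phiAngle vstar w = Real.arccos c := rfl
  obtain ⟨hN0, hNle⟩ := gker_bounds c hcm1 hc1
  set N : ℝ := π - gker (phiAngle vstar w) with hN
  have hN0' : 0 ≤ N := by rw [hN, hphi]; exact hN0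
  have hNδ : N ≤ π * δ / 2 := by
    rw [hN, hphi]
    calc π - gker (Real.arccos c) ≤ π * (1 - c) := hNle
      _ ≤ π * (δ / 2) := by
          apply mul_le_mul_of_nonneg_left hcδ (le_of_lt hπ)
      _ = π * δ / 2 := by ring
  -- key algebraic identity
  set S : ℝ := ∑ j, a j with hS
  set T : ℝ := ∑ j, astar j with hT
  set X : ℝ := dotp a astar - dotp astar astar with hX
  have key : dotp (-(Ga vstar astar w a)) (astar - a)
      = (1 / (2 * π)) * ((S - T) ^ 2
          + (π - 1) * dotp (a - astar) (a - astar) + N * X) := by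
    rw [hX, hN]
    unfold dotp Ga
    simp only [Pi.neg_apply, Pi.sub_apply]
    rw [← hS, ← hT]
    trans (∑ i, ((1 / (2 * π)) * ((T - S) * astar i)
        - (1 / (2 * π)) * ((T - S) * a i)
        + (1 / (2 * π)) * ((π - 1) * ((a i - astar i) * (a i - astar i)))
        + (1 / (2 * π)) * ((π - gker (phiAngle vstar w)) * (a i * astar i))
        - (1 / (2 * π)) * ((π - gker (phiAngle vstar w)) * (astar i * astar i))))
    · exact Finset.sum_congr rfl fun i _ => by ring
    · simp only [Finset.sum_add_distrib, Finset.sum_sub_distrib, ← Finset.mul_sum]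
      rw [← hS, ← hT]
      ring
  rw [key]
  -- lower bound on the cross term
  have hA : -(π * δ / 2 * |X|) ≤ N * X := by
    have h1 : N * (-|X|) ≤ N * X := mul_le_mul_of_nonneg_left (neg_abs_le X) hN0'
    have h2 : N * |X| ≤ π * δ / 2 * |X| :=
      mul_le_mul_of_nonneg_right hNδ (abs_nonneg X)
    rw [mul_neg] at h1
    exact le_trans (neg_le_neg h2) h1
  have hB : -(δ / 4 * |X|) ≤ (1 / (2 * π)) * (N * X) := by
    have h3 : (1 / (2 * π)) * (-(π * δ / 2 * |X|)) ≤ (1 / (2 * π)) * (N * X) :=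
      mul_le_mul_of_nonneg_left hA (by positivity)
    have h4 : (1 / (2 * π)) * (-(π * δ / 2 * |X|)) = -(δ / 4 * |X|) := by
      field_simp; ring
    linarith
  have hQ : (0:ℝ) ≤ (1 / (2 * π)) * (S - T) ^ 2 := by positivity
  have h5 : (1 / (2 * π)) * ((S - T) ^ 2
        + (π - 1) * dotp (a - astar) (a - astar) + N * X)
      = (π - 1) / (2 * π) * dotp (a - astar) (a - astar)
        + (1 / (2 * π)) * (S - T) ^ 2 + (1 / (2 * π)) * (N * X) := by ring
  linarith
end
end
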